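/- arXiv:math/0501342 — 5 statements merged into one kernel-verified Lean document; each statement's English description precedes it below -/
import Mathlib

section
/- Let R → S be a flat local homomorphism of commutative Noetherian local rings, and let C be a semidualizing R-module. Then C ⊗_R S is a semidualizing S-module. -/
open CategoryTheory IsLocalRing TensorProduct

universe u

noncomputable section

/-- `extMod R i M N` is the Ext module `Ext_R^i(M, N)`. -/
abbrev extMod (R : Type u) [CommRing R] (i : ℕ) (M N : ModuleCat.{u} R) :
    ModuleCat.{u} R :=
  ((Ext R (ModuleCat.{u} R) i).obj (Opposite.op M)).obj N

/-- A finitely generated `R`-module `C` is *semidualizing* if the natural homomorphism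
`R → Hom_R(C, C)` (sending `r` to multiplication by `r`) is bijective
and `Ext_R^i(C, C) = 0` for all `i > 0`. -/
def IsSemidualizing (R : Type u) [CommRing R] (C : ModuleCat.{u} R) : Prop :=
  Module.Finite R C ∧ Function.Bijective (LinearMap.lsmul R C) ∧
    ∀ i : ℕ, 0 < i → Subsingleton (extMod R i C C)

/-- A finitely generated `R`-module `X` is *G-projective* if the biduality map
`X → Hom_R(Hom_R(X,R),R)` is bijective and `Ext_R^i(X, R) = 0 = Ext_R^i(X^*, R)`
for all `i > 0`. -/
def IsGProjective (R : Type u) [CommRing R] (X : ModuleCat.{u} R) : Prop :=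
  Module.Finite R X ∧ Function.Bijective (Module.Dual.eval R X) ∧
    (∀ i : ℕ, 0 < i → Subsingleton (extMod R i X (ModuleCat.of R R))) ∧
    (∀ i : ℕ, 0 < i →
      Subsingleton (extMod R i (ModuleCat.of R (Module.Dual R X)) (ModuleCat.of R R)))

/-- `IsMinimalSyzygy R N M` : there is a short exact sequence `0 → N → F → M → 0`
with `F` finite free and the image of `N` contained in `m·F`. -/
def IsMinimalSyzygy (R : Type u) [CommRing R] [IsLocalRing R]
    (N M : ModuleCat.{u} R) : Prop :=
  ∃ (F : ModuleCat.{u} R) (g : N ⟶ F) (f : F ⟶ M),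
    Module.Free R F ∧ Module.Finite R F ∧
    Function.Injective g ∧ Function.Surjective f ∧
    LinearMap.range (g.hom : ↥N →ₗ[R] ↥F) = LinearMap.ker (f.hom : ↥F →ₗ[R] ↥M) ∧
    LinearMap.range (g.hom : ↥N →ₗ[R] ↥F) ≤ (maximalIdeal R) • (⊤ : Submodule R F)

/-- `IsSyzygy R n M S` means that `S` is an `n`-th syzygy module `Ω^n_R M` of `M`,
i.e. there are modules `M = N₀, N₁, …, Nₙ ≅ S` with each `N_{i+1}` a minimal first
syzygy of `N_i`. -/
def IsSyzygy (R : Type u) [CommRing R] [IsLocalRing R] :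
    ℕ → ModuleCat.{u} R → ModuleCat.{u} R → Prop
  | 0, M, S => Nonempty (S ≃ₗ[R] M)
  | n + 1, M, S => ∃ N : ModuleCat.{u} R, IsMinimalSyzygy R N M ∧ IsSyzygy R n N S

/-- The depth of a module `N` over a local ring `R`: the least `i` with
`Ext_R^i(k, N) ≠ 0`. -/
def moduleDepth (R : Type u) [CommRing R] [IsLocalRing R] (N : ModuleCat.{u} R) : ℕ :=
  sInf {i : ℕ | ¬ Subsingleton (extMod R i (ModuleCat.of R (ResidueField R)) N)}

/-- `depth R`, the least `i` with `Ext_R^i(k, R) ≠ 0`. -/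
abbrev ringDepth (R : Type u) [CommRing R] [IsLocalRing R] : ℕ :=
  moduleDepth R (ModuleCat.of R R)

/-- The grade of a module `N`: the least `i` with `Ext_R^i(N, R) ≠ 0`,
with grade `∞` when no such `i` exists (e.g. for the zero module). -/
def moduleGrade (R : Type u) [CommRing R] (N : ModuleCat.{u} R) : ℕ∞ :=
  sInf ((↑) '' {i : ℕ | ¬ Subsingleton (extMod R i N (ModuleCat.of R R))})

/-- A Noetherian local ring is *regular* if its maximal ideal can be generated by
`dim R` elements, i.e. the Krull dimension equals the embedding dimension
`dim_k m/m²`. -/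
def IsRegularLocalRing' (R : Type u) [CommRing R] [IsLocalRing R] : Prop :=
  IsNoetherianRing R ∧
    ringKrullDim R = (Module.finrank (ResidueField R) (CotangentSpace R) : WithBot ℕ∞)

/-- A Noetherian local ring is *Gorenstein* if it has finite injective dimension as a
module over itself; equivalently, there is an `n` such that `Ext_R^i(M, R) = 0`
for all modules `M` and all `i > n`. -/
def IsGorensteinLocalRing (R : Type u) [CommRing R] [IsLocalRing R] : Prop :=
  ∃ n : ℕ, ∀ i : ℕ, n < i → ∀ M : ModuleCat.{u} R,
    Subsingleton (extMod R i M (ModuleCat.of R R))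

/-- A module is *indecomposable* if it is nonzero and in any direct sum decomposition
one of the two summands vanishes. -/
def IsIndecomposableModule (R : Type u) [CommRing R] (M : ModuleCat.{u} R) : Prop :=
  Nontrivial M ∧ ∀ (X Y : ModuleCat.{u} R),
    Nonempty (M ≃ₗ[R] ↥X × ↥Y) → Subsingleton X ∨ Subsingleton Y

/-! ### Auxiliary machinery -/

/-- Auxiliary: a bundled finitely generated module. -/
structure FinModData (R : Type u) [CommRing R] : Type (u + 1) where
  M : Type u
  [acg : AddCommGroup M]
  [mod : Module R M]
  [fin : Module.Finite R M]

attribute [instance] FinModData.acg FinModData.mod FinModData.fin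

namespace FinModData

variable {R : Type u} [CommRing R]

/-- rank of a chosen free cover -/
def n (D : FinModData R) : ℕ := (Module.Finite.exists_fin' R D.M).choose

/-- chosen surjection from a finite free module -/
def π (D : FinModData R) : (Fin D.n → R) →ₗ[R] D.M :=
  (Module.Finite.exists_fin' R D.M).choose_spec.choose

lemma π_surj (D : FinModData R) : Function.Surjective D.π :=
  (Module.Finite.exists_fin' R D.M).choose_spec.choose_spec

/-- the next syzygy -/
def next [IsNoetherianRing R] (D : FinModData R) : FinModData R :=
  ⟨LinearMap.ker D.π⟩

end FinModData

section Resolution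

variable {R : Type u} [CommRing R] [IsNoetherianRing R]

variable (D₀ : FinModData R)

/-- sequence of syzygy data -/
def resData : ℕ → FinModData R
  | 0 => D₀
  | (k + 1) => (resData k).next

/-- free modules of the resolution -/
abbrev resF (k : ℕ) : ModuleCat.{u} R := ModuleCat.of R (Fin (resData D₀ k).n → R)

instance (k : ℕ) : Module.Free R (resF D₀ k) := by
  unfold resF; exact inferInstanceAs (Module.Free R (Fin _ → R))

instance (k : ℕ) : Module.Finite R (resF D₀ k) := by
  unfold resF; exact inferInstanceAs (Module.Finite R (Fin _ → R))

/-- differentials -/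
def resg (k : ℕ) : resF D₀ (k + 1) ⟶ resF D₀ k :=
  ModuleCat.ofHom ((LinearMap.ker (resData D₀ k).π).subtype ∘ₗ (resData D₀ (k + 1)).π)

lemma resπ_resg (k : ℕ) : (resData D₀ k).π ∘ₗ (resg D₀ k).hom = 0 := by
  refine LinearMap.ext fun x => ?_
  exact ((resData D₀ (k + 1)).π x).2

lemma resg_resg (k : ℕ) : (resg D₀ k).hom ∘ₗ (resg D₀ (k + 1)).hom = 0 := by
  refine LinearMap.ext fun x => ?_
  exact congrArg Subtype.val (congrFun (congrArg DFunLike.coe (resπ_resg D₀ (k+1))) x)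

lemma resg_exact (k : ℕ) : Function.Exact (resg D₀ (k + 1)).hom (resg D₀ k).hom := by
  intro y
  constructor
  · intro hy
    have hy' : (resData D₀ (k + 1)).π y = 0 := Subtype.val_injective hy
    obtain ⟨z, hz⟩ := (resData D₀ (k + 2)).π_surj ⟨y, hy'⟩
    exact ⟨z, congrArg Subtype.val hz⟩
  · rintro ⟨z, rfl⟩
    exact congrArg Subtype.val (congrFun (congrArg DFunLike.coe (resπ_resg D₀ (k+1))) z)

lemma res_exact0 : Function.Exact (resg D₀ 0).hom (resData D₀ 0).π := by
  intro y
  constructor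
  · intro hy
    obtain ⟨z, hz⟩ := (resData D₀ 1).π_surj ⟨y, hy⟩
    exact ⟨z, congrArg Subtype.val hz⟩
  · rintro ⟨z, rfl⟩
    exact ((resData D₀ 1).π z).2

end Resolution

lemma chainComplex_of_d {V : Type*} [Category V] [Limits.HasZeroMorphisms V]
    (X : ℕ → V) (d : ∀ n, X (n + 1) ⟶ X n) (sq : ∀ n, d (n + 1) ≫ d n = 0) (j : ℕ) :
    (ChainComplex.of X d sq).d (j + 1) j = d j := ChainComplex.of_d X d j

section MkRes

variable {R : Type u} [CommRing R]
  (F : ℕ → ModuleCat.{u} R) (g : ∀ k, F (k+1) ⟶ F k)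
  (sq : ∀ k, g (k+1) ≫ g k = 0)
  (Z : ModuleCat.{u} R) (π₀ : F 0 ⟶ Z)
  (hπ₀ : Function.Surjective π₀) (hex0 : Function.Exact (g 0) π₀)
  (hex : ∀ k, Function.Exact (g (k+1)) (g k))
  (hproj : ∀ k, Projective (F k))

/-- From concrete exactness data, build a projective resolution. -/
def mkProjRes : ProjectiveResolution Z where
  complex := ChainComplex.of F g sq
  projective k := hproj k
  π := (ChainComplex.toSingle₀Equiv _ _).symm ⟨π₀, by
        rw [show (1:ℕ) = 0 + 1 from rfl, chainComplex_of_d]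
        exact ModuleCat.hom_ext (LinearMap.ext fun x => hex0.apply_apply_eq_zero x)⟩
  quasiIso := ⟨fun n => by
    cases n with
    | zero =>
      rw [ChainComplex.quasiIsoAt₀_iff, ShortComplex.quasiIso_iff_of_zeros']
      · constructor
        · rw [ShortComplex.moduleCat_exact_iff]
          intro x hx
          have hx' : π₀ x = 0 := hx
          exact (hex0 x).mp hx'
        · rw [ModuleCat.epi_iff_surjective]
          exact hπ₀
      all_goals rfl
    | succ n =>
      rw [quasiIsoAt_iff_exactAt']
      · rw [HomologicalComplex.exactAt_iff' _ (n+2) (n+1) n (by simp) (by simp)]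
        rw [ShortComplex.moduleCat_exact_iff]
        intro x hx
        have e1 : (HomologicalComplex.sc' (ChainComplex.of F g sq) (n + 2) (n + 1) n).g = g n :=
          chainComplex_of_d F g sq n
        have e2 : (HomologicalComplex.sc' (ChainComplex.of F g sq) (n + 2) (n + 1) n).f = g (n + 1) :=
          chainComplex_of_d F g sq (n + 1)
        rw [e1] at hx
        rw [e2]
        exact (hex n x).mp hx
      · exact ChainComplex.exactAt_succ_single_obj _ _⟩

end MkRes

section Eta
variable (R S : Type u) [CommRing R] [CommRing S] [Algebra R S]
variable (C : Type u) [AddCommGroup C] [Module R C]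

/-- The natural base-change map `Hom_R(M,C) ⊗ S → Hom_S(S⊗M, S⊗C)`. -/
def eta (M : Type u) [AddCommGroup M] [Module R M] :
    ((M →ₗ[R] C) ⊗[R] S) →ₗ[R] (S ⊗[R] M →ₗ[S] S ⊗[R] C) :=
  TensorProduct.lift <|
  { toFun := fun u =>
      { toFun := fun s => s • u.baseChange S
        map_add' := fun a b => add_smul a b _
        map_smul' := fun r s => smul_assoc r s _ }
    map_add' := fun u v => LinearMap.ext fun s => by
        simp [LinearMap.baseChange_add, smul_add]
    map_smul' := fun r u => LinearMap.ext fun s => by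
        simp only [LinearMap.baseChange_smul, RingHom.id_apply, LinearMap.smul_apply,
          LinearMap.coe_mk, AddHom.coe_mk]
        rw [smul_comm] }

variable {R S C}

@[simp] lemma eta_tmul (M : Type u) [AddCommGroup M] [Module R M]
    (u : M →ₗ[R] C) (s : S) :
    eta R S C M (u ⊗ₜ s) = s • u.baseChange S := rfl

lemma eta_natural {M M' : Type u} [AddCommGroup M] [Module R M]
    [AddCommGroup M'] [Module R M'] (f : M' →ₗ[R] M) (w : (M →ₗ[R] C) ⊗[R] S) :
    eta R S C M' ((LinearMap.lcomp R C f).rTensor S w) =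
      (eta R S C M w) ∘ₗ (f.baseChange S) := by
  induction w using TensorProduct.induction_on with
  | zero => simp
  | tmul u s =>
    simp only [LinearMap.rTensor_tmul, LinearMap.lcomp_apply', eta_tmul]
    rw [LinearMap.baseChange_comp, LinearMap.smul_comp]
  | add x y hx hy => simp [map_add, LinearMap.add_comp, hx, hy]

lemma eta_bijective (M : Type u) [AddCommGroup M] [Module R M]
    [Module.Free R M] [Module.Finite R M] :
    Function.Bijective (eta R S C M) := by
  have key : ∀ w, eta R S C M w =
      (LinearMap.liftBaseChangeEquiv S)
        ((LinearEquiv.arrowCongr (LinearEquiv.refl R M) (TensorProduct.comm R C S))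
          ((rTensorHomEquivHomRTensor R M C S) w)) := by
    intro w
    induction w using TensorProduct.induction_on with
    | zero => simp
    | tmul u s =>
      rw [eta_tmul, rTensorHomEquivHomRTensor_apply]
      apply LinearMap.ext
      intro z
      induction z using TensorProduct.induction_on with
      | zero => simp
      | tmul t x =>
        simp only [LinearMap.smul_apply, LinearMap.baseChange_tmul,
          LinearEquiv.arrowCongr_apply, LinearEquiv.refl_symm, LinearEquiv.refl_apply,
          LinearMap.liftBaseChange_tmul, LinearEquiv.coe_coe,
          rTensorHomToHomRTensor_apply, TensorProduct.comm_tmul]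
        rw [TensorProduct.smul_tmul', TensorProduct.smul_tmul']
        rw [smul_eq_mul, smul_eq_mul, mul_comm]
      | add a b ha hb => simp only [map_add, ha, hb]
    | add x y hx hy => simp [map_add, hx, hy]
  rw [show ⇑(eta R S C M) = _ from funext key]
  exact (LinearMap.liftBaseChangeEquiv S).bijective.comp
    ((LinearEquiv.arrowCongr (LinearEquiv.refl R M) (TensorProduct.comm R C S)).bijective.comp
      (rTensorHomEquivHomRTensor R M C S).bijective)

end Eta


section BaseChangeRes

variable (R S : Type u) [CommRing R] [IsNoetherianRing R] [CommRing S] [Algebra R S]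
variable (D₀ : FinModData R)

/-- base-changed free modules -/
def resFS (k : ℕ) : ModuleCat.{u} S := ModuleCat.of S (S ⊗[R] ↥(resF D₀ k))

/-- base-changed differentials -/
def resgS (k : ℕ) : resFS R S D₀ (k+1) ⟶ resFS R S D₀ k :=
  ModuleCat.ofHom ((resg D₀ k).hom.baseChange S)

/-- base-changed augmentation -/
def resπS : resFS R S D₀ 0 ⟶ ModuleCat.of S (S ⊗[R] D₀.M) :=
  ModuleCat.ofHom (((resData D₀ 0).π : ↥(resF D₀ 0) →ₗ[R] D₀.M).baseChange S)

lemma resgS_comp (k : ℕ) : resgS R S D₀ (k+1) ≫ resgS R S D₀ k = 0 := by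
  apply ModuleCat.hom_ext
  show ((resg D₀ k).hom.baseChange S) ∘ₗ
      ((resg D₀ (k+1)).hom.baseChange S) = 0
  rw [← LinearMap.baseChange_comp]
  rw [show ((resg D₀ k).hom ∘ₗ
    (resg D₀ (k+1)).hom) = 0 from resg_resg D₀ k]
  exact LinearMap.baseChange_zero

variable [Module.Flat R S]

lemma resπS_surj : Function.Surjective (resπS R S D₀) := by
  show Function.Surjective (((resData D₀ 0).π : ↥(resF D₀ 0) →ₗ[R] D₀.M).baseChange S)
  rw [LinearMap.baseChange_eq_ltensor]
  exact LinearMap.lTensor_surjective S ((resData D₀ 0).π_surj)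

lemma resgS_exact0 : Function.Exact (resgS R S D₀ 0) (resπS R S D₀) := by
  show Function.Exact ((resg D₀ 0).hom.baseChange S)
    (((resData D₀ 0).π : ↥(resF D₀ 0) →ₗ[R] D₀.M).baseChange S)
  rw [LinearMap.baseChange_eq_ltensor, LinearMap.baseChange_eq_ltensor]
  exact Module.Flat.lTensor_exact S (res_exact0 D₀)

lemma resgS_exact (k : ℕ) :
    Function.Exact (resgS R S D₀ (k+1)) (resgS R S D₀ k) := by
  show Function.Exact
    ((resg D₀ (k+1)).hom.baseChange S)
    ((resg D₀ k).hom.baseChange S)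
  rw [LinearMap.baseChange_eq_ltensor, LinearMap.baseChange_eq_ltensor]
  exact Module.Flat.lTensor_exact S (resg_exact D₀ k)

end BaseChangeRes

section Translate
variable {A : Type u} [CommRing A]

lemma subsingleton_extMod_iff {Z : ModuleCat.{u} A}
    (P : ProjectiveResolution Z) (Y : ModuleCat.{u} A) (i : ℕ) :
    Subsingleton (extMod A i Z Y) ↔ (P.complex.linearYonedaObj A Y).ExactAt i := by
  rw [HomologicalComplex.exactAt_iff_isZero_homology]
  constructor
  · intro h
    exact Limits.IsZero.of_iso (ModuleCat.isZero_of_subsingleton _) (P.isoExt i Y).symm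
  · intro h
    have h2 : Limits.IsZero (extMod A i Z Y) := h.of_iso (P.isoExt i Y)
    have hid : (𝟙 (extMod A i Z Y)) = 0 := h2.eq_of_src _ _
    constructor
    intro a b
    calc a = (𝟙 (extMod A i Z Y)) a := rfl
    _ = (0 : extMod A i Z Y ⟶ extMod A i Z Y) a := by rw [hid]
    _ = (𝟙 (extMod A i Z Y)) b := by rw [hid]; rfl
    _ = b := rfl

variable (F : ℕ → ModuleCat.{u} A) (g : ∀ k, F (k+1) ⟶ F k)
  (sq : ∀ k, g (k+1) ≫ g k = 0) (Y : ModuleCat.{u} A)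

lemma exactAt_linearYonedaObj_iff (i : ℕ) :
    ((ChainComplex.of F g sq).linearYonedaObj A Y).ExactAt (i+1) ↔
      ∀ u : F (i+1) ⟶ Y, (u.hom.comp (g (i+1)).hom = 0) →
        ∃ v : F i ⟶ Y, u.hom = v.hom.comp (g i).hom := by
  rw [HomologicalComplex.exactAt_iff' _ i (i+1) (i+2)
    (by simp) (by simp)]
  rw [ShortComplex.moduleCat_exact_iff]
  constructor
  · intro h u hu
    have hu' : (((ChainComplex.of F g sq).linearYonedaObj A Y).d (i+1) (i+2))
        (u : (((ChainComplex.of F g sq).linearYonedaObj A Y).X (i+1))) = 0 := by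
      simp only [ChainComplex.linearYonedaObj_d]
      show (ChainComplex.of F g sq).d (i+2) (i+1) ≫ u = 0
      rw [show i+2 = (i+1)+1 from rfl, chainComplex_of_d]
      exact ModuleCat.hom_ext hu
    obtain ⟨v, hv⟩ := h u hu'
    have hv' : (((ChainComplex.of F g sq).linearYonedaObj A Y).d i (i+1)) v = u := hv
    rw [ChainComplex.linearYonedaObj_d] at hv'
    rw [chainComplex_of_d] at hv'
    exact ⟨v, congrArg ModuleCat.Hom.hom hv'.symm⟩
  · intro h u hu
    have hu' : (((ChainComplex.of F g sq).linearYonedaObj A Y).d (i+1) (i+2)) u = 0 := hu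
    rw [ChainComplex.linearYonedaObj_d] at hu'
    rw [show (i:ℕ)+2 = (i+1)+1 from rfl, chainComplex_of_d] at hu'
    obtain ⟨v, hv⟩ := h u (congrArg ModuleCat.Hom.hom hu')
    refine ⟨v, ?_⟩
    show (((ChainComplex.of F g sq).linearYonedaObj A Y).d i (i+1)) v = u
    rw [ChainComplex.linearYonedaObj_d, chainComplex_of_d]
    exact ModuleCat.hom_ext hv.symm

end Translate

/-- If `R → S` is a flat local homomorphism of commutative Noetherian
local rings and `C` is a semidualizing `R`-module, then `C ⊗_R S` is a semidualizing
`S`-module. -/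
theorem isSemidualizing_baseChange_flat_local
    (R S : Type u) [CommRing R] [IsLocalRing R] [IsNoetherianRing R]
    [CommRing S] [IsLocalRing S] [IsNoetherianRing S]
    [Algebra R S] [Module.Flat R S] (hloc : IsLocalHom (algebraMap R S))
    (C : ModuleCat.{u} R) (hC : IsSemidualizing R C) :
    IsSemidualizing S (ModuleCat.of S (S ⊗[R] ↥C)) := by
  obtain ⟨hfin, hbij, hext⟩ := hC
  haveI := hfin
  -- the resolution over R
  let D₀ : FinModData R := @FinModData.mk R _ ↥C _ _ hfin
  have sqR : ∀ k, resg D₀ (k+1) ≫ resg D₀ k = 0 := fun k => ModuleCat.hom_ext (resg_resg D₀ k)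
  let PR : ProjectiveResolution C :=
    mkProjRes (resF D₀) (resg D₀) sqR C (ModuleCat.ofHom (resData D₀ 0).π)
      ((resData D₀ 0).π_surj) (res_exact0 D₀) (resg_exact D₀)
      (fun k => ModuleCat.projective_of_free (Pi.basisFun R (Fin (resData D₀ k).n)))
  -- concrete exactness of the Hom complex over R
  have hRconc : ∀ k, ∀ u : resF D₀ (k+1) ⟶ C, (u.hom.comp (resg D₀ (k+1)).hom = 0) →
      ∃ v : resF D₀ k ⟶ C, u.hom = v.hom.comp (resg D₀ k).hom := by
    intro k
    have h1 : ((ChainComplex.of (resF D₀) (resg D₀) sqR).linearYonedaObj R C).ExactAt (k+1) :=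
      (subsingleton_extMod_iff PR C (k+1)).mp (hext (k+1) (k.succ_pos))
    exact (exactAt_linearYonedaObj_iff (resF D₀) (resg D₀) sqR C k).mp h1
  have hexactHomR : ∀ k, Function.Exact
      (LinearMap.lcomp R ↥C (resg D₀ k).hom)
      (LinearMap.lcomp R ↥C (resg D₀ (k+1)).hom) := by
    intro k w
    constructor
    · intro hw
      obtain ⟨v, hv⟩ := hRconc k (ModuleCat.ofHom w) hw
      exact ⟨v.hom, hv.symm⟩
    · rintro ⟨v, rfl⟩
      show (v ∘ₗ (resg D₀ k).hom) ∘ₗ (resg D₀ (k+1)).hom = 0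
      rw [LinearMap.comp_assoc, resg_resg, LinearMap.comp_zero]
  -- the base-changed resolution over S
  let PS : ProjectiveResolution (ModuleCat.of S (S ⊗[R] ↥C)) :=
    mkProjRes (resFS R S D₀) (resgS R S D₀) (resgS_comp R S D₀)
      (ModuleCat.of S (S ⊗[R] ↥C)) (resπS R S D₀)
      (resπS_surj R S D₀) (resgS_exact0 R S D₀) (resgS_exact R S D₀)
      (fun k => ModuleCat.projective_of_free
        (Module.Free.chooseBasis S (S ⊗[R] ↥(resF D₀ k))))
  refine ⟨inferInstanceAs (Module.Finite S (S ⊗[R] ↥C)), ?_, ?_⟩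
  · -- bijectivity of lsmul
    -- preliminary: factorization through π₀
    have hfact : ∀ u : ↥(resF D₀ 0) →ₗ[R] ↥C, u ∘ₗ (resg D₀ 0).hom = 0 →
        ∃ v : ↥C →ₗ[R] ↥C, u = v ∘ₗ (resData D₀ 0).π := by
      intro u hu
      have hker : LinearMap.ker (resData D₀ 0).π ≤ LinearMap.ker u := by
        intro x hx
        have hx' : (resData D₀ 0).π x = 0 := hx
        obtain ⟨z, hz⟩ := ((res_exact0 D₀) x).mp hx'
        have : u ((resg D₀ 0).hom z) = 0 := congrFun (congrArg DFunLike.coe hu) z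
        rw [hz] at this
        exact this
      set q := LinearMap.quotKerEquivOfSurjective _ ((resData D₀ 0).π_surj)
      refine ⟨(Submodule.liftQ _ u hker) ∘ₗ q.symm.toLinearMap, ?_⟩
      apply LinearMap.ext
      intro x
      have hq : q.symm ((resData D₀ 0).π x) =
          Submodule.Quotient.mk x := by
        apply q.injective
        rw [LinearEquiv.apply_symm_apply]
        rfl
      show u x = (Submodule.liftQ _ u hker) (q.symm ((resData D₀ 0).π x))
      rw [hq]
      rfl
    have hexact0Hom : Function.Exact
        (LinearMap.lcomp R ↥C ((resData D₀ 0).π : ↥(resF D₀ 0) →ₗ[R] ↥C))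
        (LinearMap.lcomp R ↥C (resg D₀ 0).hom) := by
      intro w
      constructor
      · intro hw
        obtain ⟨v, hv⟩ := hfact w hw
        exact ⟨v, hv.symm⟩
      · rintro ⟨v, rfl⟩
        show (v ∘ₗ (resData D₀ 0).π) ∘ₗ (resg D₀ 0).hom = 0
        rw [LinearMap.comp_assoc, resπ_resg, LinearMap.comp_zero]
    have hlcompinj : Function.Injective
        (LinearMap.lcomp R ↥C ((resData D₀ 0).π : ↥(resF D₀ 0) →ₗ[R] ↥C)) := by
      intro a b hab
      apply LinearMap.ext
      intro c
      obtain ⟨x, rfl⟩ := (resData D₀ 0).π_surj c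
      exact congrFun (congrArg DFunLike.coe hab) x
    have hainj : Function.Injective
        ((LinearMap.lcomp R ↥C ((resData D₀ 0).π : ↥(resF D₀ 0) →ₗ[R] ↥C)).rTensor S) :=
      Module.Flat.rTensor_preserves_injective_linearMap _ hlcompinj
    have hetaCbij : Function.Bijective (eta R S ↥C ↥C) := by
      constructor
      · intro x y hxy
        apply hainj
        apply (eta_bijective (S := S) (C := ↥C) ↥(resF D₀ 0)).1
        have e1 := eta_natural (C := ↥C) (M := ↥C) (M' := ↥(resF D₀ 0)) ((resData D₀ 0).π) x
        have e2 := eta_natural (C := ↥C) (M := ↥C) (M' := ↥(resF D₀ 0)) ((resData D₀ 0).π) y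
        exact e1.trans ((congrArg (fun f => f ∘ₗ ((resData D₀ 0).π).baseChange S) hxy).trans e2.symm)
      · intro φ
        obtain ⟨y, hy⟩ := (eta_bijective (S := S) (C := ↥C) ↥(resF D₀ 0)).2
          (φ ∘ₗ ((resData D₀ 0).π : ↥(resF D₀ 0) →ₗ[R] ↥C).baseChange S)
        have h1 : (LinearMap.lcomp R ↥C
            (resg D₀ 0).hom).rTensor S y = 0 := by
          apply (eta_bijective (S := S) (C := ↥C) ↥(resF D₀ 1)).1
          refine (eta_natural (C := ↥C) (M := ↥(resF D₀ 0)) (M' := ↥(resF D₀ 1))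
            (resg D₀ 0).hom y).trans ?_
          rw [hy, map_zero]
          have hz : (((resData D₀ 0).π).baseChange S) ∘ₗ ((resg D₀ 0).hom.baseChange S) = 0 := by
            rw [← LinearMap.baseChange_comp, resπ_resg D₀ 0, LinearMap.baseChange_zero]
          exact (LinearMap.comp_assoc _ _ φ).trans ((congrArg (φ ∘ₗ ·) hz).trans (LinearMap.comp_zero φ))
        obtain ⟨x, hx⟩ := ((Module.Flat.rTensor_exact S hexact0Hom) y).mp h1
        refine ⟨x, ?_⟩
        have h2 : (eta R S ↥C ↥C x) ∘ₗ
            (((resData D₀ 0).π : ↥(resF D₀ 0) →ₗ[R] ↥C).baseChange S) =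
            φ ∘ₗ (((resData D₀ 0).π : ↥(resF D₀ 0) →ₗ[R] ↥C).baseChange S) :=
          ((eta_natural (C := ↥C) (M := ↥C) (M' := ↥(resF D₀ 0)) ((resData D₀ 0).π) x).symm.trans
            (DFunLike.congr_arg (eta R S ↥C ↥(resF D₀ 0)) hx)).trans hy
        apply LinearMap.ext
        intro z
        obtain ⟨z', rfl⟩ := resπS_surj R S D₀ z
        exact congrFun (congrArg DFunLike.coe h2) z'
    have hτ : Function.Bijective
        (fun s : S => ((LinearMap.id : ↥C →ₗ[R] ↥C) ⊗ₜ[R] s : (↥C →ₗ[R] ↥C) ⊗[R] S)) := by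
      have heq : (fun s : S => ((LinearMap.id : ↥C →ₗ[R] ↥C) ⊗ₜ[R] s)) =
          ⇑(TensorProduct.congr (LinearEquiv.ofBijective (LinearMap.lsmul R ↥C) hbij)
            (LinearEquiv.refl R S)) ∘ ⇑(TensorProduct.lid R S).symm := by
        funext s
        show (LinearMap.id : ↥C →ₗ[R] ↥C) ⊗ₜ[R] s = _
        rw [Function.comp_apply, TensorProduct.lid_symm_apply, TensorProduct.congr_tmul]
        congr 1
        · exact LinearMap.ext fun x => (one_smul R x).symm
      rw [heq]
      exact (TensorProduct.congr (LinearEquiv.ofBijective (LinearMap.lsmul R ↥C) hbij)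
        (LinearEquiv.refl R S)).bijective.comp (TensorProduct.lid R S).symm.bijective
    have hfactor : ⇑(LinearMap.lsmul S ↥(ModuleCat.of S (S ⊗[R] ↥C))) =
        ⇑(eta R S ↥C ↥C) ∘
          (fun s : S => ((LinearMap.id : ↥C →ₗ[R] ↥C) ⊗ₜ[R] s)) := by
      funext s
      apply LinearMap.ext
      intro x
      show s • x = (s • (LinearMap.id : ↥C →ₗ[R] ↥C).baseChange S) x
      rw [LinearMap.baseChange_id]
      rfl
    rw [hfactor]
    exact hetaCbij.comp hτ
  · -- Ext vanishing
    intro i hi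
    obtain ⟨k, rfl⟩ : ∃ k, i = k + 1 := ⟨i - 1, (Nat.succ_pred_eq_of_pos hi).symm⟩
    rw [subsingleton_extMod_iff PS _ (k+1)]
    show ((ChainComplex.of (resFS R S D₀) (resgS R S D₀) (resgS_comp R S D₀)).linearYonedaObj S
      (ModuleCat.of S (S ⊗[R] ↥C))).ExactAt (k+1)
    rw [exactAt_linearYonedaObj_iff]
    intro u hu
    obtain ⟨w, hw⟩ := (eta_bijective (S := S) (C := ↥C) ↥(resF D₀ (k+1))).2 u.hom
    have h1 : (LinearMap.lcomp R ↥C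
        (resg D₀ (k+1)).hom).rTensor S w = 0 := by
      apply (eta_bijective (S := S) (C := ↥C) ↥(resF D₀ (k+2))).1
      refine (eta_natural (C := ↥C) (M := ↥(resF D₀ (k+1))) (M' := ↥(resF D₀ (k+2)))
        (resg D₀ (k+1)).hom w).trans ?_
      rw [hw, map_zero]
      exact hu
    obtain ⟨w', hw'⟩ := ((Module.Flat.rTensor_exact S (hexactHomR k)) w).mp h1
    refine ⟨ModuleCat.ofHom (eta R S ↥C ↥(resF D₀ k) w'), ?_⟩
    rw [← hw, ← hw']
    exact eta_natural (C := ↥C) (M := ↥(resF D₀ k)) (M' := ↥(resF D₀ (k+1))) (resg D₀ k).hom w'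


end
end

section
/- Let R be a commutative ring and let 0 → L →^f M →^g N → 0 be a short exact sequence of R-modules. Suppose L = X ⊕ Y and write f = (σ, τ) with σ: X → M and τ: Y → M the restrictions of f. Set A = Coker σ with quotient map α: M → A and B = Coker τ with quotient map β: M → B. Then: (1) 0 → X →^σ M →^α A → 0 is exact; (2) 0 → Y →^τ M →^β B → 0 is exact; (3) there is an exact sequence 0 → X →^{βσ} B →^ζ N → 0 where ζ(β(x)) = g(x); (4) there is an exact sequence 0 → Y →^{ατ} A →^η N → 0 where η(α(x)) = g(x); (5) there is an exact sequence 0 → M →^{(α,β)} A ⊕ B →^γ N → 0 where γ(α(x), β(y)) = g(x − y). -/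
open CategoryTheory IsLocalRing TensorProduct

universe u

noncomputable section

/-- Given a short exact sequence `0 → X ⊕ Y →f M →g N → 0` of modules
over a commutative ring, with `σ, τ` the restrictions of `f` to `X, Y`, and
`A = Coker σ`, `B = Coker τ` (with quotient maps `α, β`), there are five induced short
exact sequences as in Lemma 3.1 of the paper. -/
theorem five_exact_sequences_from_decomposed_kernel
    (R : Type u) [CommRing R]
    (X Y M N : Type u) [AddCommGroup X] [AddCommGroup Y] [AddCommGroup M] [AddCommGroup N]
    [Module R X] [Module R Y] [Module R M] [Module R N]
    (f : X × Y →ₗ[R] M) (g : M →ₗ[R] N)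
    (hf : Function.Injective f) (hfg : Function.Exact f g) (hg : Function.Surjective g) :
    let σ : X →ₗ[R] M := f ∘ₗ LinearMap.inl R X Y
    let τ : Y →ₗ[R] M := f ∘ₗ LinearMap.inr R X Y
    let α := (LinearMap.range σ).mkQ
    let β := (LinearMap.range τ).mkQ
    -- (1) `0 → X →σ M →α A → 0` is exact
    (Function.Injective σ ∧ Function.Exact σ α ∧ Function.Surjective α) ∧
    -- (2) `0 → Y →τ M →β B → 0` is exact
    (Function.Injective τ ∧ Function.Exact τ β ∧ Function.Surjective β) ∧
    -- (3) `0 → X →βσ B →ζ N → 0` is exact, where `ζ(β(x)) = g(x)`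
    (∃ ζ : (M ⧸ LinearMap.range τ) →ₗ[R] N, (∀ m : M, ζ (β m) = g m) ∧
      Function.Injective (β ∘ₗ σ) ∧ Function.Exact (β ∘ₗ σ) ζ ∧ Function.Surjective ζ) ∧
    -- (4) `0 → Y →ατ A →η N → 0` is exact, where `η(α(x)) = g(x)`
    (∃ η : (M ⧸ LinearMap.range σ) →ₗ[R] N, (∀ m : M, η (α m) = g m) ∧
      Function.Injective (α ∘ₗ τ) ∧ Function.Exact (α ∘ₗ τ) η ∧ Function.Surjective η) ∧
    -- (5) `0 → M →(α,β) A ⊕ B →γ N → 0` is exact, where `γ(α(x), β(y)) = g(x - y)`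
    (∃ γ : ((M ⧸ LinearMap.range σ) × (M ⧸ LinearMap.range τ)) →ₗ[R] N,
      (∀ m m' : M, γ (α m, β m') = g (m - m')) ∧
      Function.Injective (α.prod β) ∧ Function.Exact (α.prod β) γ ∧
      Function.Surjective γ) := by
  intro σ τ α β
  have hker : LinearMap.ker g = LinearMap.range f := hfg.linearMap_ker_eq
  have hsum : ∀ x y, f (x, y) = σ x + τ y := by
    intro x y
    have h : (x, y) = (x, 0) + ((0 : X), y) := by simp
    rw [h, map_add]; rfl
  have hσinj : Function.Injective σ := by
    intro a b h
    exact congrArg Prod.fst (hf h)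
  have hτinj : Function.Injective τ := by
    intro a b h
    exact congrArg Prod.snd (hf h)
  have hασ : Function.Exact σ α := by
    rw [LinearMap.exact_iff, Submodule.ker_mkQ]
  have hβτ : Function.Exact τ β := by
    rw [LinearMap.exact_iff, Submodule.ker_mkQ]
  have hσg : LinearMap.range σ ≤ LinearMap.ker g := by
    rintro _ ⟨x, rfl⟩
    rw [hker]
    exact ⟨(x, 0), rfl⟩
  have hτg : LinearMap.range τ ≤ LinearMap.ker g := by
    rintro _ ⟨y, rfl⟩
    rw [hker]
    exact ⟨(0, y), rfl⟩
  set ζ := (LinearMap.range τ).liftQ g hτg with hζ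
  set η := (LinearMap.range σ).liftQ g hσg with hη
  have hζβ : ∀ m : M, ζ (β m) = g m := fun m => rfl
  have hηα : ∀ m : M, η (α m) = g m := fun m => rfl
  have hζsurj : Function.Surjective ζ := by
    intro n
    obtain ⟨m, rfl⟩ := hg n
    exact ⟨β m, rfl⟩
  have hηsurj : Function.Surjective η := by
    intro n
    obtain ⟨m, rfl⟩ := hg n
    exact ⟨α m, rfl⟩
  have hβσinj : Function.Injective (β ∘ₗ σ) := by
    intro a b h
    have h' : β (σ a - σ b) = 0 := by
      rw [map_sub]
      simpa [sub_eq_zero] using h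
    have : σ a - σ b ∈ LinearMap.range τ := by
      rwa [← Submodule.ker_mkQ (LinearMap.range τ), LinearMap.mem_ker]
    obtain ⟨y, hy⟩ := this
    have hfe : f (a, 0) - f (b, 0) = f (0, y) := hy.symm
    have : f ((a, 0) - (b, 0)) = f (0, y) := by rw [map_sub]; exact hfe
    have h2 := hf this
    have h3 : a - b = 0 := congrArg Prod.fst h2
    exact sub_eq_zero.mp h3
  have hατinj : Function.Injective (α ∘ₗ τ) := by
    intro a b h
    have h' : α (τ a - τ b) = 0 := by
      rw [map_sub]
      simpa [sub_eq_zero] using h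
    have : τ a - τ b ∈ LinearMap.range σ := by
      rwa [← Submodule.ker_mkQ (LinearMap.range σ), LinearMap.mem_ker]
    obtain ⟨x, hx⟩ := this
    have hfe : f (0, a) - f (0, b) = f (x, 0) := hx.symm
    have : f ((0, a) - (0, b)) = f (x, 0) := by rw [map_sub]; exact hfe
    have h2 := hf this
    have h3 : a - b = 0 := congrArg Prod.snd h2
    exact sub_eq_zero.mp h3
  have hβσζ : Function.Exact (β ∘ₗ σ) ζ := by
    rw [LinearMap.exact_iff]
    apply le_antisymm
    · rintro q hq
      obtain ⟨m, rfl⟩ := Submodule.mkQ_surjective _ q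
      have hgm : g m = 0 := hq
      have : m ∈ LinearMap.range f := by rw [← hker]; exact hgm
      obtain ⟨⟨x, y⟩, hxy⟩ := this
      refine ⟨x, ?_⟩
      have heq : m - σ x = τ y := by
        rw [← hxy, hsum]; abel
      have hmem : m - σ x ∈ LinearMap.range τ := heq ▸ ⟨y, rfl⟩
      exact ((Submodule.Quotient.eq _).mpr hmem).symm
    · rintro _ ⟨x, rfl⟩
      show ζ (β (σ x)) = 0
      rw [hζβ]
      exact hσg ⟨x, rfl⟩
  have hατη : Function.Exact (α ∘ₗ τ) η := by
    rw [LinearMap.exact_iff]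
    apply le_antisymm
    · rintro q hq
      obtain ⟨m, rfl⟩ := Submodule.mkQ_surjective _ q
      have hgm : g m = 0 := hq
      have : m ∈ LinearMap.range f := by rw [← hker]; exact hgm
      obtain ⟨⟨x, y⟩, hxy⟩ := this
      refine ⟨y, ?_⟩
      have heq : m - τ y = σ x := by
        rw [← hxy, hsum]; abel
      have hmem : m - τ y ∈ LinearMap.range σ := heq ▸ ⟨x, rfl⟩
      exact ((Submodule.Quotient.eq _).mpr hmem).symm
    · rintro _ ⟨y, rfl⟩
      show η (α (τ y)) = 0
      rw [hηα]
      exact hτg ⟨y, rfl⟩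
  refine ⟨⟨hσinj, hασ, Submodule.mkQ_surjective _⟩,
    ⟨hτinj, hβτ, Submodule.mkQ_surjective _⟩,
    ⟨ζ, hζβ, hβσinj, hβσζ, hζsurj⟩,
    ⟨η, hηα, hατinj, hατη, hηsurj⟩, ?_⟩
  -- part (5)
  set γ : ((M ⧸ LinearMap.range σ) × (M ⧸ LinearMap.range τ)) →ₗ[R] N :=
    η ∘ₗ LinearMap.fst R _ _ - ζ ∘ₗ LinearMap.snd R _ _ with hγ
  have hγval : ∀ m m' : M, γ (α m, β m') = g (m - m') := by
    intro m m'
    simp only [hγ, LinearMap.sub_apply, LinearMap.comp_apply, LinearMap.fst_apply,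
      LinearMap.snd_apply, hηα, hζβ, map_sub]
  refine ⟨γ, hγval, ?_, ?_, ?_⟩
  · intro a b h
    have h1 : α (a - b) = 0 := by
      rw [map_sub]
      have := congrArg Prod.fst h
      simpa [sub_eq_zero] using this
    have h2 : β (a - b) = 0 := by
      rw [map_sub]
      have := congrArg Prod.snd h
      simpa [sub_eq_zero] using this
    have hm1 : a - b ∈ LinearMap.range σ := by
      rwa [← Submodule.ker_mkQ (LinearMap.range σ), LinearMap.mem_ker]
    have hm2 : a - b ∈ LinearMap.range τ := by
      rwa [← Submodule.ker_mkQ (LinearMap.range τ), LinearMap.mem_ker]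
    obtain ⟨x, hx⟩ := hm1
    obtain ⟨y, hy⟩ := hm2
    have : f (x, 0) = f (0, y) := by
      show σ x = τ y
      rw [hx, hy]
    have h3 := hf this
    have hx0 : x = 0 := congrArg Prod.fst h3
    have : a - b = 0 := by rw [← hx, hx0]; simp [σ]; exact map_zero f
    exact sub_eq_zero.mp this
  · rw [LinearMap.exact_iff]
    apply le_antisymm
    · rintro ⟨qa, qb⟩ hq
      obtain ⟨m, rfl⟩ := Submodule.mkQ_surjective _ qa
      obtain ⟨m', rfl⟩ := Submodule.mkQ_surjective _ qb
      have hgm : g (m - m') = 0 := by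
        have : γ (α m, β m') = 0 := hq
        rwa [hγval] at this
      have : m - m' ∈ LinearMap.range f := by rw [← hker]; exact hgm
      obtain ⟨⟨x, y⟩, hxy⟩ := this
      refine ⟨m - σ x, ?_⟩
      have hα : α (m - σ x) = α m := by
        have hmem : (m - σ x) - m ∈ LinearMap.range σ := by
          refine ⟨-x, ?_⟩
          simp
        exact (Submodule.Quotient.eq _).mpr hmem
      have hβ' : β (m - σ x) = β m' := by
        have heq : m - σ x - m' = τ y := by
          have : m - m' = σ x + τ y := by rw [← hxy, hsum]
          rw [show m - σ x - m' = (m - m') - σ x by abel, this]; abel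
        have hmem : (m - σ x) - m' ∈ LinearMap.range τ := heq ▸ ⟨y, rfl⟩
        exact (Submodule.Quotient.eq _).mpr hmem
      show (α (m - σ x), β (m - σ x)) = (α m, β m')
      rw [hα, hβ']
    · rintro _ ⟨m, rfl⟩
      show γ (α m, β m) = 0
      rw [hγval]
      simp
  · intro n
    obtain ⟨m, rfl⟩ := hg n
    refine ⟨(α m, 0), ?_⟩
    have : ((0 : M ⧸ LinearMap.range τ)) = β 0 := by simp
    rw [this, hγval]
    simp

end
end

section
/- Let (R, m, k) be a commutative Noetherian local ring and let C be a semidualizing R-module. If Ext_R^1(C, m) = 0 (where m is regarded as an R-module), then C ≅ R. -/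
open CategoryTheory IsLocalRing TensorProduct

universe u

noncomputable section

lemma lift_along_quot_of_ext_one (R : Type u) [CommRing R] (I : Ideal R)
    (C : ModuleCat.{u} R)
    (h : Subsingleton (extMod R 1 C (ModuleCat.of R ↥I)))
    (g : ↥C →ₗ[R] R ⧸ I) : ∃ φ : ↥C →ₗ[R] R, I.mkQ ∘ₗ φ = g := by
  have P : ProjectiveResolution C := HasProjectiveResolution.out.some
  set M : ModuleCat.{u} R := ModuleCat.of R ↥I with hM
  set K := P.complex.linearYonedaObj R M with hK
  -- exactness of the Hom complex at degree 1
  have hzero : Limits.IsZero (K.homology 1) :=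
    (ModuleCat.isZero_of_subsingleton (extMod R 1 C M)).of_iso (P.isoExt 1 M).symm
  have hex : K.ExactAt 1 := (HomologicalComplex.exactAt_iff_isZero_homology _ _).2 hzero
  have hex' : (K.sc' 0 1 2).Exact :=
    ((HomologicalComplex.exactAt_iff' K 0 1 2 (by simp) (by simp)).1 hex)
  rw [ShortComplex.moduleCat_exact_iff] at hex'
  -- the resolution data
  let p : ↥(P.complex.X 0) →ₗ[R] ↥C := (P.π.f 0 : P.complex.X 0 ⟶ C).hom
  let d1 : ↥(P.complex.X 1) →ₗ[R] ↥(P.complex.X 0) := (P.complex.d 1 0).hom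
  let d2 : ↥(P.complex.X 2) →ₗ[R] ↥(P.complex.X 1) := (P.complex.d 2 1).hom
  have hpsurj : Function.Surjective p :=
    (ModuleCat.epi_iff_surjective (P.π.f 0)).1 inferInstance
  have hd1p : ∀ x, p (d1 x) = 0 := by
    have h2 : p ∘ₗ d1 = 0 := congrArg ModuleCat.Hom.hom P.complex_d_comp_π_f_zero
    intro x
    simpa using LinearMap.congr_fun h2 x
  have hexact0 : ∀ x, p x = 0 → ∃ y, d1 y = x := by
    have := P.exact₀
    rw [ShortComplex.moduleCat_exact_iff] at this
    exact this
  have hd21 : ∀ x, d1 (d2 x) = 0 := by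
    have h2 : d1 ∘ₗ d2 = 0 := congrArg ModuleCat.Hom.hom (P.complex.d_comp_d 2 1 0)
    intro x
    simpa using LinearMap.congr_fun h2 x
  -- lift g ∘ p through R → R/I using projectivity of P₀
  haveI : Module.Projective R ↥(P.complex.X 0) :=
    ModuleCat.projective_of_module_projective (P.complex.X 0)
  obtain ⟨h', hh'⟩ := Module.projective_lifting_property I.mkQ (g ∘ₗ p)
    (Submodule.mkQ_surjective I)
  -- h' ∘ d1 lands in I
  have hmem : ∀ x, h' (d1 x) ∈ I := by
    intro x
    have h3 : I.mkQ (h' (d1 x)) = g (p (d1 x)) := LinearMap.congr_fun hh' (d1 x)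
    rw [hd1p x, map_zero] at h3
    simpa [← Submodule.Quotient.mk_eq_zero, Submodule.mkQ_apply] using h3
  let u : ↥(P.complex.X 1) →ₗ[R] ↥I := LinearMap.codRestrict (I.restrictScalars R)
    (h' ∘ₗ d1) hmem
  let uh : P.complex.X 1 ⟶ M := ModuleCat.ofHom u
  -- u is a cocycle
  have hu : (K.sc' 0 1 2).g uh = 0 := by
    show (P.complex.d 2 1 ≫ uh) = 0
    apply ModuleCat.hom_ext
    apply LinearMap.ext
    intro x
    apply Subtype.ext
    show h' (d1 (d2 x)) = 0
    rw [hd21 x, map_zero]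
  obtain ⟨t, ht⟩ := hex' _ hu
  let t' : ↥(P.complex.X 0) →ₗ[R] ↥I := (t : P.complex.X 0 ⟶ M).hom
  have ht2 : t' ∘ₗ d1 = u := congrArg (fun f : P.complex.X 1 ⟶ M => f.hom) ht
  have ht' : ∀ x, t' (d1 x) = u x := fun x => LinearMap.congr_fun ht2 x
  let φ0 : ↥(P.complex.X 0) →ₗ[R] R := h' - (I.subtype ∘ₗ t')
  have hφ0 : ∀ x, φ0 (d1 x) = 0 := by
    intro x
    show h' (d1 x) - I.subtype (t' (d1 x)) = 0
    rw [ht' x]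
    show h' (d1 x) - h' (d1 x) = 0
    exact sub_self _
  have hker : ∀ x, p x = 0 → φ0 x = 0 := by
    intro x hx
    obtain ⟨y, hy⟩ := hexact0 x hx
    rw [← hy]; exact hφ0 y
  -- descend φ0 along p
  have hle : LinearMap.ker p ≤ LinearMap.ker φ0 := fun x hx => hker x hx
  let e := p.quotKerEquivOfSurjective hpsurj
  let φ : ↥C →ₗ[R] R := (Submodule.liftQ (LinearMap.ker p) φ0 hle) ∘ₗ
    (e.symm : ↥C →ₗ[R] _)
  have hφp : ∀ x, φ (p x) = φ0 x := by
    intro x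
    have he : e (Submodule.Quotient.mk x) = p x := by
      simp [e, LinearMap.quotKerEquivOfSurjective, LinearMap.quotKerEquivRange]
    have h4 : e.symm (p x) = Submodule.Quotient.mk x := by
      rw [LinearEquiv.symm_apply_eq, he]
    show (Submodule.liftQ (LinearMap.ker p) φ0 hle) (e.symm (p x)) = φ0 x
    rw [h4, Submodule.liftQ_apply]
  refine ⟨φ, ?_⟩
  ext c
  obtain ⟨x, rfl⟩ := hpsurj c
  show I.mkQ (φ (p x)) = g (p x)
  rw [hφp x]
  show I.mkQ (h' x - I.subtype (t' x)) = g (p x)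
  rw [map_sub]
  have h1 : I.mkQ (h' x) = g (p x) := LinearMap.congr_fun hh' x
  have h2 : I.mkQ (I.subtype (t' x)) = 0 := by
    rw [Submodule.mkQ_apply]
    exact (Submodule.Quotient.mk_eq_zero I).2 (t' x).2
  rw [h1, h2, sub_zero]

lemma aux_exists_nonzero_to_residue (R : Type u) [CommRing R] [IsLocalRing R] (C : ModuleCat.{u} R)
    [Module.Finite R ↥C] [Nontrivial ↥C] :
    ∃ g : ↥C →ₗ[R] R ⧸ maximalIdeal R, g ≠ 0 := by
  set m := maximalIdeal R
  set mC : Submodule R ↥C := m • ⊤ with hmC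
  have hne : mC ≠ ⊤ := by
    intro htop
    have hbot : (⊤ : Submodule R ↥C) = ⊥ :=
      Submodule.eq_bot_of_le_smul_of_le_jacobson_bot m ⊤ Module.Finite.fg_top
        htop.ge (by simpa using IsLocalRing.maximalIdeal_le_jacobson ⊥)
    exact top_ne_bot (hbot.trans rfl) |>.elim
  obtain ⟨c, hc⟩ : ∃ c : ↥C, c ∉ mC := by
    by_contra hall
    push_neg at hall
    exact hne (eq_top_iff.2 fun x _ => hall x)
  -- the quotient as a vector space over the residue field
  letI : Field (R ⧸ m) := Ideal.Quotient.field m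
  have hvne : (Submodule.Quotient.mk c : ↥C ⧸ mC) ≠ 0 := by
    simpa [Submodule.Quotient.mk_eq_zero] using hc
  obtain ⟨f, hf⟩ : ∃ f : Module.Dual (R ⧸ m) (↥C ⧸ mC),
      f (Submodule.Quotient.mk c) ≠ 0 := by
    by_contra hall
    push_neg at hall
    exact hvne ((Module.forall_dual_apply_eq_zero_iff (R ⧸ m) _).1 hall)
  refine ⟨?_, ?_⟩
  · exact
    { toFun := fun x => f (Submodule.Quotient.mk x)
      map_add' := fun x y => by simp [Submodule.Quotient.mk_add]
      map_smul' := fun r x => by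
        have h1 : (Submodule.Quotient.mk (r • x) : ↥C ⧸ mC) =
            (Ideal.Quotient.mk m r) • Submodule.Quotient.mk x :=
          rfl
        rw [RingHom.id_apply]
        show f (Submodule.Quotient.mk (r • x)) = r • f (Submodule.Quotient.mk x)
        rw [h1, map_smul]
        show (Ideal.Quotient.mk m r) • f (Submodule.Quotient.mk x)
            = r • f (Submodule.Quotient.mk x)
        obtain ⟨a, ha⟩ := Ideal.Quotient.mk_surjective (f (Submodule.Quotient.mk x))
        rw [← ha]
        show (Ideal.Quotient.mk m r) * (Ideal.Quotient.mk m a) = r • (Ideal.Quotient.mk m a)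
        rw [← map_mul]
        rfl }
  · intro h0
    apply hf
    have := congrArg (fun (g : ↥C →ₗ[R] R ⧸ m) => g c) h0
    simpa using this

lemma aux_equiv_of_surjective (R : Type u) [CommRing R] [IsLocalRing R] (C : ModuleCat.{u} R)
    (hbij : Function.Bijective (LinearMap.lsmul R C))
    (φ : ↥C →ₗ[R] R) (hsurj : Function.Surjective φ) :
    Nonempty (↥C ≃ₗ[R] R) := by
  obtain ⟨s, hs⟩ := Module.projective_lifting_property φ LinearMap.id hsurj
  obtain ⟨r, hr⟩ := hbij.2 (s ∘ₗ φ)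
  have hsφ : ∀ x : R, φ (s x) = x := fun x => LinearMap.congr_fun hs x
  have h1 : ∀ y : ↥C, r • y = s (φ y) := fun y => LinearMap.congr_fun hr y
  have hidem : r * r = r := by
    apply hbij.1
    apply LinearMap.ext
    intro x
    show (r * r) • x = r • x
    rw [mul_smul, h1 x, h1 (s (φ x)), hsφ (φ x)]
  rcases IsLocalRing.isUnit_or_isUnit_one_sub_self r with hu | hu
  · -- r is a unit, so r = 1
    have hr1 : r = 1 := by
      have : r * r = r * 1 := by rw [mul_one, hidem]
      exact hu.mul_left_cancel this
    have hinj : Function.Injective φ := by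
      intro a b hab
      have : r • a = r • b := by rw [h1 a, h1 b, hab]
      rwa [hr1, one_smul, one_smul] at this
    exact ⟨LinearEquiv.ofBijective φ ⟨hinj, hsurj⟩⟩
  · -- 1 - r is a unit, so r = 0, contradiction
    exfalso
    have hr0 : r = 0 := by
      have : (1 - r) * r = (1 - r) * 0 := by rw [mul_zero, sub_mul, one_mul, hidem, sub_self]
      exact hu.mul_left_cancel this
    obtain ⟨x, hx⟩ := hsurj 1
    have : (1 : R) = 0 := by
      have h2 : s (φ x) = 0 := by rw [← h1 x, hr0, zero_smul]
      have := hsφ (φ x)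
      rw [h2, map_zero] at this
      rw [← hx, ← hsφ (φ x), h2, map_zero]
    exact one_ne_zero this

/-- If `C` is a semidualizing module over a commutative Noetherian
local ring `R` with `Ext_R^1(C, m) = 0`, then `C ≅ R`. -/
theorem isSemidualizing_free_of_ext_one_maximalIdeal_vanishes
    (R : Type u) [CommRing R] [IsLocalRing R] [IsNoetherianRing R]
    (C : ModuleCat.{u} R) (hC : IsSemidualizing R C)
    (h : Subsingleton (extMod R 1 C (ModuleCat.of R ↥(maximalIdeal R)))) :
    Nonempty (↥C ≃ₗ[R] R) := by
  obtain ⟨hfin, hbij, -⟩ := hC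
  haveI : Module.Finite R ↥C := hfin
  haveI hnt : Nontrivial ↥C := by
    by_contra hn
    rw [not_nontrivial_iff_subsingleton] at hn
    have h01 : (0 : R) = 1 := hbij.1 (by
      apply LinearMap.ext
      intro x
      exact Subsingleton.elim _ _)
    exact zero_ne_one h01
  obtain ⟨g, hg⟩ := aux_exists_nonzero_to_residue R C
  obtain ⟨φ, hφ⟩ := lift_along_quot_of_ext_one R (maximalIdeal R) C h g
  have hsurj : Function.Surjective φ := by
    rw [← LinearMap.range_eq_top]
    by_contra hne
    apply hg
    have hle := IsLocalRing.le_maximalIdeal hne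
    apply LinearMap.ext
    intro c
    have h1 : g c = (maximalIdeal R).mkQ (φ c) := (LinearMap.congr_fun hφ c).symm
    show g c = 0
    rw [h1, Submodule.mkQ_apply]
    exact (Submodule.Quotient.mk_eq_zero _).2 (hle (LinearMap.mem_range_self φ c))
  exact aux_equiv_of_surjective R C hbij φ hsurj

end
end

section
/- Let (R, m, k) be a commutative Noetherian local ring and let x ∈ m \ m² be a nonzerodivisor on R. Set R̄ = R/(x). Then for every i ≥ 0 there is an isomorphism of R̄-modules Ω^{i+1}_R k ⊗_R R̄ ≅ Ω^{i+1}_{R̄} k ⊕ Ω^i_{R̄} k. -/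
open CategoryTheory IsLocalRing TensorProduct

universe u

noncomputable section

set_option linter.unusedSectionVars false
set_option linter.unusedVariables false
set_option maxHeartbeats 1000000

section
variable {S : Type u} [CommRing S] [IsLocalRing S] [IsNoetherianRing S]

lemma range_eq_top_of_sup {F' : Type u} [AddCommGroup F'] [Module S F']
    [Module.Finite S F'] {N : Submodule S F'}
    (h : N ⊔ (maximalIdeal S) • ⊤ = ⊤) : N = ⊤ := by
  have hfg : (⊤ : Submodule S (F' ⧸ N)).FG := by
    have : Module.Finite S (F' ⧸ N) := Module.Finite.of_surjective N.mkQ (Submodule.mkQ_surjective N)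
    exact Module.Finite.fg_top
  have hle : (⊤ : Submodule S (F' ⧸ N)) ≤ (maximalIdeal S) • ⊤ := by
    intro q _
    obtain ⟨y, rfl⟩ := Submodule.mkQ_surjective N q
    have hy : y ∈ N ⊔ maximalIdeal S • ⊤ := by rw [h]; exact Submodule.mem_top
    obtain ⟨a, ha, b, hb, rfl⟩ := Submodule.mem_sup.mp hy
    have ha0 : N.mkQ a = 0 := (Submodule.Quotient.mk_eq_zero N).2 ha
    have h1 : N.mkQ (a + b) = N.mkQ b := by
      rw [map_add, ha0, zero_add]
    rw [h1]
    have : N.mkQ b ∈ ((maximalIdeal S) • ⊤ : Submodule S F').map N.mkQ :=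
      Submodule.mem_map_of_mem hb
    rw [Submodule.map_smul''] at this
    exact Submodule.smul_mono le_rfl le_top this
  have hbot := Submodule.eq_bot_of_le_smul_of_le_jacobson_bot (maximalIdeal S) ⊤ hfg hle
    (le_of_eq (IsLocalRing.jacobson_eq_maximalIdeal ⊥ bot_ne_top).symm)
  rw [eq_top_iff]
  intro y _
  have : N.mkQ y = 0 := (Submodule.eq_bot_iff _).1 hbot (N.mkQ y) Submodule.mem_top
  exact (Submodule.Quotient.mk_eq_zero N).1 this

/-- comparison map of minimal free covers is surjective -/
lemma comparison_surjective {F F' M M' : Type u}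
    [AddCommGroup F] [Module S F] [AddCommGroup F'] [Module S F']
    [AddCommGroup M] [Module S M] [AddCommGroup M'] [Module S M'] [Module.Finite S F']
    (f : F →ₗ[S] M) (f' : F' →ₗ[S] M') (φ : F →ₗ[S] F') (e : M ≃ₗ[S] M')
    (hcomm : f'.comp φ = e.toLinearMap.comp f) (hfsurj : Function.Surjective f)
    (hker : LinearMap.ker f' ≤ (maximalIdeal S) • ⊤) :
    Function.Surjective φ := by
  have hsup : LinearMap.range φ ⊔ ((maximalIdeal S) • ⊤ : Submodule S F') = ⊤ := by
    rw [eq_top_iff]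
    intro y _
    obtain ⟨m, hm⟩ := hfsurj (e.symm (f' y))
    have hcm : f' (φ m) = f' y := by
      have := LinearMap.congr_fun hcomm m
      simp only [LinearMap.coe_comp, Function.comp_apply, LinearEquiv.coe_coe] at this
      rw [this, hm, LinearEquiv.apply_symm_apply]
    have : y - φ m ∈ LinearMap.ker f' := by
      simp [LinearMap.mem_ker, map_sub, hcm]
    refine Submodule.mem_sup.mpr ⟨φ m, LinearMap.mem_range_self φ m, y - φ m, hker this, by abel⟩
  have := range_eq_top_of_sup hsup
  exact LinearMap.range_eq_top.mp this

lemma minimalSyzygy_unique {N M N' M' : ModuleCat.{u} S}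
    (h : IsMinimalSyzygy S N M) (h' : IsMinimalSyzygy S N' M')
    (e : ↥M ≃ₗ[S] ↥M') : Nonempty (↥N ≃ₗ[S] ↥N') := by
  obtain ⟨F, g, f, hF1, hF2, ginj, fsurj, hrk, hmin⟩ := h
  obtain ⟨F', g', f', hF1', hF2', ginj', fsurj', hrk', hmin'⟩ := h'
  haveI := hF1; haveI := hF2; haveI := hF1'; haveI := hF2'
  haveI : Module.Projective S ↥F := Module.Projective.of_free
  haveI : Module.Projective S ↥F' := Module.Projective.of_free
  obtain ⟨φ, hφ⟩ := Module.projective_lifting_property (f'.hom : ↥F' →ₗ[S] ↥M')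
    (e.toLinearMap.comp (f.hom : ↥F →ₗ[S] ↥M)) fsurj'
  obtain ⟨ψ, hψ⟩ := Module.projective_lifting_property (f.hom : ↥F →ₗ[S] ↥M)
    (e.symm.toLinearMap.comp (f'.hom : ↥F' →ₗ[S] ↥M')) fsurj
  have hφs : Function.Surjective φ :=
    comparison_surjective _ _ φ e hφ fsurj (hrk' ▸ hmin')
  have hψs : Function.Surjective ψ :=
    comparison_surjective _ _ ψ e.symm hψ fsurj' (hrk ▸ hmin)
  have hcomp : Function.Surjective (ψ.comp φ) := hψs.comp hφs
  have hinj : Function.Injective (ψ.comp φ) := by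
    haveI : IsNoetherian S ↥F := isNoetherian_of_isNoetherianRing_of_finite S ↥F
    exact IsNoetherian.injective_of_surjective_endomorphism _ hcomp
  have hφi : Function.Injective φ := fun a b hab => hinj (by simp [LinearMap.comp_apply, hab])
  -- φ maps ker f onto ker f'
  have hmap : (LinearMap.ker (f.hom : ↥F →ₗ[S] ↥M)).map φ = LinearMap.ker (f'.hom : ↥F' →ₗ[S] ↥M') := by
    apply le_antisymm
    · rintro _ ⟨z, hz, rfl⟩
      have := LinearMap.congr_fun hφ z
      simp only [LinearMap.coe_comp, Function.comp_apply, LinearEquiv.coe_coe] at this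
      simp only [LinearMap.mem_ker] at hz ⊢
      rw [this, hz, map_zero]
    · intro y hy
      obtain ⟨z, rfl⟩ := hφs y
      refine ⟨z, ?_, rfl⟩
      have := LinearMap.congr_fun hφ z
      simp only [LinearMap.coe_comp, Function.comp_apply, LinearEquiv.coe_coe] at this
      simp only [LinearMap.mem_ker] at hy ⊢
      have : e (f z) = 0 := by rw [← this]; exact hy
      exact (LinearEquiv.map_eq_zero_iff e).mp this
  exact ⟨(((((LinearEquiv.ofInjective _ ginj).trans (LinearEquiv.ofEq _ _ hrk)).trans
    (Submodule.equivMapOfInjective φ hφi _)).trans (LinearEquiv.ofEq _ _ hmap)).trans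
    (LinearEquiv.ofEq _ _ hrk'.symm)).trans (LinearEquiv.ofInjective _ ginj').symm⟩
lemma maximalIdeal_isMinimalSyzygy :
    IsMinimalSyzygy S (ModuleCat.of S ↥(maximalIdeal S)) (ModuleCat.of S (ResidueField S)) := by
  refine ⟨ModuleCat.of S S, ModuleCat.ofHom (maximalIdeal S).subtype,
    ModuleCat.ofHom (maximalIdeal S).mkQ, inferInstanceAs (Module.Free S S),
    inferInstanceAs (Module.Finite S S),
    Submodule.injective_subtype _, Submodule.mkQ_surjective _, ?_, ?_⟩
  · show LinearMap.range (maximalIdeal S).subtype = LinearMap.ker (maximalIdeal S).mkQ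
    rw [Submodule.range_subtype, Submodule.ker_mkQ]
  · show LinearMap.range (maximalIdeal S).subtype ≤ _
    rw [Submodule.range_subtype]
    intro y hy
    have : y • (1 : S) ∈ (maximalIdeal S) • (⊤ : Submodule S S) :=
      Submodule.smul_mem_smul hy Submodule.mem_top
    simpa using this

lemma minimalSyzygy_prod {N M N' M' : ModuleCat.{u} S}
    (h : IsMinimalSyzygy S N M) (h' : IsMinimalSyzygy S N' M') :
    IsMinimalSyzygy S (ModuleCat.of S (↥N × ↥N')) (ModuleCat.of S (↥M × ↥M')) := by
  obtain ⟨F, g, f, hF1, hF2, ginj, fsurj, hrk, hmin⟩ := h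
  obtain ⟨F', g', f', hF1', hF2', ginj', fsurj', hrk', hmin'⟩ := h'
  haveI := hF1; haveI := hF2; haveI := hF1'; haveI := hF2'
  refine ⟨ModuleCat.of S (↥F × ↥F'),
    ModuleCat.ofHom ((g.hom : ↥N →ₗ[S] ↥F).prodMap (g'.hom : ↥N' →ₗ[S] ↥F')),
    ModuleCat.ofHom ((f.hom : ↥F →ₗ[S] ↥M).prodMap (f'.hom : ↥F' →ₗ[S] ↥M')),
    inferInstanceAs (Module.Free S (↥F × ↥F')), inferInstanceAs (Module.Finite S (↥F × ↥F')),
    ?_, ?_, ?_, ?_⟩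
  · show Function.Injective ⇑(LinearMap.prodMap (g.hom : ↥N →ₗ[S] ↥F) (g'.hom : ↥N' →ₗ[S] ↥F'))
    rw [LinearMap.coe_prodMap]
    exact Function.Injective.prodMap ginj ginj'
  · show Function.Surjective ⇑(LinearMap.prodMap (f.hom : ↥F →ₗ[S] ↥M) (f'.hom : ↥F' →ₗ[S] ↥M'))
    rw [LinearMap.coe_prodMap]
    exact Function.Surjective.prodMap fsurj fsurj'
  · show LinearMap.range (LinearMap.prodMap _ _) = LinearMap.ker (LinearMap.prodMap _ _)
    rw [LinearMap.ker_prodMap, ← hrk, ← hrk']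
    ext ⟨a, b⟩
    simp only [LinearMap.mem_range, LinearMap.prodMap_apply, Submodule.mem_prod, Prod.mk.injEq,
      Prod.exists]
    constructor
    · rintro ⟨n, n', hn, hn'⟩; exact ⟨⟨n, hn⟩, ⟨n', hn'⟩⟩
    · rintro ⟨⟨n, hn⟩, ⟨n', hn'⟩⟩; exact ⟨n, n', hn, hn'⟩
  · show LinearMap.range (LinearMap.prodMap _ _) ≤ _
    rintro _ ⟨⟨n, n'⟩, rfl⟩
    have h1 : ((g.hom : ↥N →ₗ[S] ↥F) n, (0 : ↥F')) ∈
        (maximalIdeal S) • (⊤ : Submodule S (↥F × ↥F')) := by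
      have : (g.hom : ↥N →ₗ[S] ↥F) n ∈ (maximalIdeal S) • (⊤ : Submodule S ↥F) :=
        hmin (LinearMap.mem_range_self _ n)
      have := Submodule.mem_map_of_mem (f := LinearMap.inl S ↥F ↥F') this
      rw [Submodule.map_smul''] at this
      exact Submodule.smul_mono le_rfl le_top this
    have h2 : ((0 : ↥F), (g'.hom : ↥N' →ₗ[S] ↥F') n') ∈
        (maximalIdeal S) • (⊤ : Submodule S (↥F × ↥F')) := by
      have : (g'.hom : ↥N' →ₗ[S] ↥F') n' ∈ (maximalIdeal S) • (⊤ : Submodule S ↥F') :=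
        hmin' (LinearMap.mem_range_self _ n')
      have := Submodule.mem_map_of_mem (f := LinearMap.inr S ↥F ↥F') this
      rw [Submodule.map_smul''] at this
      exact Submodule.smul_mono le_rfl le_top this
    have := Submodule.add_mem _ h1 h2
    simpa using this

lemma free_smul_eq_zero {F : Type u} [AddCommGroup F] [Module S F] [Module.Free S F]
    {x : S} (hx : x ∈ nonZeroDivisors S) {v : F} (h : x • v = 0) : v = 0 := by
  let b := Module.Free.chooseBasis S F
  have : b.repr (x • v) = 0 := by rw [h, map_zero]
  rw [map_smul] at this
  have hz : ∀ i, x * b.repr v i = 0 := fun i => by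
    have := DFunLike.congr_fun this i
    simpa using this
  have : b.repr v = 0 := by
    ext i
    have := hz i
    rw [mul_comm] at this
    simpa using (mem_nonZeroDivisors_iff_right.mp hx) _ this
  simpa using congrArg b.repr.symm this

lemma minimalSyzygy_smul_eq_zero {N M : ModuleCat.{u} S}
    (h : IsMinimalSyzygy S N M) {x : S} (hx : x ∈ nonZeroDivisors S) :
    ∀ n : ↥N, x • n = 0 → n = 0 := by
  obtain ⟨F, g, f, hF1, hF2, ginj, fsurj, hrk, hmin⟩ := h
  haveI := hF1
  intro n hn
  have : x • (g.hom : ↥N →ₗ[S] ↥F) n = 0 := by rw [← map_smul, hn, map_zero]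
  have := free_smul_eq_zero hx this
  exact ginj (by simpa using this)
end
section
variable {R : Type u} [CommRing R] [IsLocalRing R] [IsNoetherianRing R]
variable (x : R) [IsLocalRing (R ⧸ Ideal.span ({x} : Set R))]

lemma span_le_max (hx : x ∈ maximalIdeal R) : Ideal.span {x} ≤ maximalIdeal R := by
  rw [Ideal.span_le, Set.singleton_subset_iff]; exact hx

lemma mk_mem_maximalIdeal (hx : x ∈ maximalIdeal R) {a : R} (ha : a ∈ maximalIdeal R) :
    Ideal.Quotient.mk (Ideal.span {x}) a ∈ maximalIdeal (R ⧸ Ideal.span ({x} : Set R)) := by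
  rw [IsLocalRing.mem_maximalIdeal, mem_nonunits_iff]
  intro h
  obtain ⟨b, hb⟩ := isUnit_iff_exists_inv.mp h
  obtain ⟨c, rfl⟩ := Ideal.Quotient.mk_surjective b
  rw [← map_mul, ← map_one (Ideal.Quotient.mk (Ideal.span ({x} : Set R))),
    Ideal.Quotient.eq] at hb
  have h1 : (1 : R) = a * c - (a * c - 1) := by ring
  have : (1 : R) ∈ maximalIdeal R := by
    rw [h1]
    exact Submodule.sub_mem _ (Ideal.mul_mem_right _ _ ha) (span_le_max x hx hb)
  exact (IsLocalRing.maximalIdeal.isMaximal R).ne_top ((Ideal.eq_top_iff_one _).mpr this)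

lemma exists_mem_of_mem_maximalIdeal {b : R ⧸ Ideal.span ({x} : Set R)}
    (hb : b ∈ maximalIdeal (R ⧸ Ideal.span ({x} : Set R))) :
    ∃ a ∈ maximalIdeal R, Ideal.Quotient.mk (Ideal.span {x}) a = b := by
  obtain ⟨a, rfl⟩ := Ideal.Quotient.mk_surjective b
  by_cases ha : a ∈ maximalIdeal R
  · exact ⟨a, ha, rfl⟩
  · exfalso
    have : IsUnit a := by
      by_contra h
      exact ha ((IsLocalRing.mem_maximalIdeal a).mpr h)
    have : IsUnit (Ideal.Quotient.mk (Ideal.span ({x} : Set R)) a) :=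
      this.map (Ideal.Quotient.mk _)
    exact (IsLocalRing.mem_maximalIdeal _).mp hb this

lemma one_tmul_surjective (A : Type u) [AddCommGroup A] [Module R A] :
    ∀ z : (R ⧸ Ideal.span ({x} : Set R)) ⊗[R] A, ∃ a : A, z = (1 : R ⧸ Ideal.span ({x} : Set R)) ⊗ₜ[R] a := by
  intro z
  have h : Function.Surjective (algebraMap R (R ⧸ Ideal.span ({x} : Set R))) := by
    rw [Ideal.Quotient.algebraMap_eq]
    exact Ideal.Quotient.mk_surjective
  obtain ⟨a, ha⟩ := TensorProduct.mk_surjective R A (R ⧸ Ideal.span ({x} : Set R)) h z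
  exact ⟨a, ha.symm⟩

lemma one_tmul_smul_eq_zero {A : Type u} [AddCommGroup A] [Module R A] (a : A) :
    (1 : R ⧸ Ideal.span ({x} : Set R)) ⊗ₜ[R] (x • a) = 0 := by
  rw [TensorProduct.tmul_smul, TensorProduct.smul_tmul']
  have h0 : (x • (1 : R ⧸ Ideal.span ({x} : Set R))) = 0 := by
    rw [← Algebra.algebraMap_eq_smul_one, Ideal.Quotient.algebraMap_eq,
      Ideal.Quotient.eq_zero_iff_mem]
    exact Ideal.mem_span_singleton_self x
  rw [h0, TensorProduct.zero_tmul]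

lemma tmul_eq_zero_of_free {F : Type u} [AddCommGroup F] [Module R F] [Module.Free R F]
    {v : F} (h : (1 : R ⧸ Ideal.span ({x} : Set R)) ⊗ₜ[R] v = 0) : ∃ w : F, v = x • w := by
  let b := Module.Free.chooseBasis R F
  let c := Algebra.TensorProduct.basis (R ⧸ Ideal.span ({x} : Set R)) b
  have hrepr : c.repr ((1 : R ⧸ Ideal.span ({x} : Set R)) ⊗ₜ[R] v) = 0 := by rw [h, map_zero]
  rw [Algebra.TensorProduct.basis_repr_tmul, one_smul] at hrepr
  have hz : ∀ i, Ideal.Quotient.mk (Ideal.span ({x} : Set R)) (b.repr v i) = 0 := by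
    intro i
    have := DFunLike.congr_fun hrepr i
    simpa using this
  have hmem : ∀ i, ∃ r : R, b.repr v i = x * r := by
    intro i
    have := Ideal.Quotient.eq_zero_iff_mem.mp (hz i)
    obtain ⟨r, hr⟩ := Ideal.mem_span_singleton'.mp this
    exact ⟨r, by rw [← hr, mul_comm]⟩
  choose u hu using hmem
  refine ⟨(b.repr v).support.sum (fun i => u i • b i), ?_⟩
  rw [Finset.smul_sum]
  have : ∀ i ∈ (b.repr v).support, x • (u i • b i) = (b.repr v) i • b i := by
    intro i _
    rw [smul_smul, ← hu i]
  rw [Finset.sum_congr rfl this]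
  have hv := Module.Basis.linearCombination_repr b v
  rwa [Finsupp.linearCombination_apply, Finsupp.sum, eq_comm] at hv

lemma one_tmul_mem_smul_top {F : Type u} [AddCommGroup F] [Module R F]
    (hx : x ∈ maximalIdeal R) {v : F}
    (hv : v ∈ (maximalIdeal R) • (⊤ : Submodule R F)) :
    (1 : R ⧸ Ideal.span ({x} : Set R)) ⊗ₜ[R] v ∈
      (maximalIdeal (R ⧸ Ideal.span ({x} : Set R))) •
        (⊤ : Submodule (R ⧸ Ideal.span ({x} : Set R)) ((R ⧸ Ideal.span ({x} : Set R)) ⊗[R] F)) := by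
  refine Submodule.smul_induction_on hv ?_ ?_
  · intro r hr u _
    have h1 : (1 : R ⧸ Ideal.span ({x} : Set R)) ⊗ₜ[R] (r • u)
        = (Ideal.Quotient.mk (Ideal.span ({x} : Set R)) r) • ((1 : R ⧸ Ideal.span ({x} : Set R)) ⊗ₜ[R] u) := by
      rw [TensorProduct.tmul_smul, ← Ideal.Quotient.algebraMap_eq, algebraMap_smul]
    rw [h1]
    exact Submodule.smul_mem_smul (mk_mem_maximalIdeal x hx hr) Submodule.mem_top
  · intro u v hu hv'
    rw [TensorProduct.tmul_add]
    exact Submodule.add_mem _ hu hv'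

lemma isMinimalSyzygy_baseChange (hx : x ∈ maximalIdeal R) (hreg : x ∈ nonZeroDivisors R)
    {N M : ModuleCat.{u} R} (h : IsMinimalSyzygy R N M)
    (hM : ∀ m : ↥M, x • m = 0 → m = 0) :
    IsMinimalSyzygy (R ⧸ Ideal.span ({x} : Set R))
      (ModuleCat.of _ ((R ⧸ Ideal.span ({x} : Set R)) ⊗[R] ↥N))
      (ModuleCat.of _ ((R ⧸ Ideal.span ({x} : Set R)) ⊗[R] ↥M)) := by
  obtain ⟨F, g, f, hF1, hF2, ginj, fsurj, hrk, hmin⟩ := h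
  haveI := hF1; haveI := hF2
  refine ⟨ModuleCat.of _ ((R ⧸ Ideal.span ({x} : Set R)) ⊗[R] ↥F),
    ModuleCat.ofHom ((g.hom : ↥N →ₗ[R] ↥F).baseChange (R ⧸ Ideal.span ({x} : Set R))),
    ModuleCat.ofHom ((f.hom : ↥F →ₗ[R] ↥M).baseChange (R ⧸ Ideal.span ({x} : Set R))),
    inferInstanceAs (Module.Free _ ((R ⧸ Ideal.span ({x} : Set R)) ⊗[R] ↥F)),
    inferInstanceAs (Module.Finite _ ((R ⧸ Ideal.span ({x} : Set R)) ⊗[R] ↥F)), ?_, ?_, ?_, ?_⟩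
  · -- injectivity
    show Function.Injective ⇑((g.hom : ↥N →ₗ[R] ↥F).baseChange (R ⧸ Ideal.span ({x} : Set R)))
    intro z z' hz
    obtain ⟨n, rfl⟩ := one_tmul_surjective x ↥N z
    obtain ⟨n', rfl⟩ := one_tmul_surjective x ↥N z'
    rw [LinearMap.baseChange_tmul, LinearMap.baseChange_tmul] at hz
    have hz0 : (1 : R ⧸ Ideal.span ({x} : Set R)) ⊗ₜ[R] ((g.hom : ↥N →ₗ[R] ↥F) (n - n')) = 0 := by
      rw [map_sub, TensorProduct.tmul_sub, hz, sub_self]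
    obtain ⟨w, hw⟩ := tmul_eq_zero_of_free x hz0
    have hfw : (f.hom : ↥F →ₗ[R] ↥M) ((g.hom : ↥N →ₗ[R] ↥F) (n - n')) = 0 := by
      have : (g.hom : ↥N →ₗ[R] ↥F) (n - n') ∈ LinearMap.ker (f.hom : ↥F →ₗ[R] ↥M) :=
        hrk ▸ LinearMap.mem_range_self _ _
      exact this
    have hxfw : x • (f.hom : ↥F →ₗ[R] ↥M) w = 0 := by
      rw [← map_smul, ← hw, hfw]
    have hwker : w ∈ LinearMap.ker (f.hom : ↥F →ₗ[R] ↥M) := hM _ hxfw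
    rw [← hrk] at hwker
    obtain ⟨u, hu⟩ := hwker
    have : (g.hom : ↥N →ₗ[R] ↥F) (n - n') = (g.hom : ↥N →ₗ[R] ↥F) (x • u) := by
      rw [map_smul, hu, ← hw]
    have hnn : n - n' = x • u := ginj this
    have : (1 : R ⧸ Ideal.span ({x} : Set R)) ⊗ₜ[R] (n - n') = 0 := by
      rw [hnn]; exact one_tmul_smul_eq_zero x u
    rw [TensorProduct.tmul_sub] at this
    have := sub_eq_zero.mp this
    exact this
  · -- surjectivity
    show Function.Surjective ⇑((f.hom : ↥F →ₗ[R] ↥M).baseChange (R ⧸ Ideal.span ({x} : Set R)))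
    intro z
    obtain ⟨m, rfl⟩ := one_tmul_surjective x ↥M z
    obtain ⟨n, hn⟩ := fsurj m
    exact ⟨(1 : R ⧸ Ideal.span ({x} : Set R)) ⊗ₜ[R] n, by rw [LinearMap.baseChange_tmul, hn]⟩
  · -- exactness
    show LinearMap.range ((g.hom : ↥N →ₗ[R] ↥F).baseChange (R ⧸ Ideal.span ({x} : Set R)))
      = LinearMap.ker ((f.hom : ↥F →ₗ[R] ↥M).baseChange (R ⧸ Ideal.span ({x} : Set R)))
    have hex : Function.Exact (g.hom : ↥N →ₗ[R] ↥F) (f.hom : ↥F →ₗ[R] ↥M) :=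
      LinearMap.exact_iff.mpr hrk.symm
    have hex2 := lTensor_exact (R ⧸ Ideal.span ({x} : Set R)) hex fsurj
    ext z
    simp only [LinearMap.mem_range, LinearMap.mem_ker]
    constructor
    · rintro ⟨y, rfl⟩
      show ((f.hom : ↥F →ₗ[R] ↥M).baseChange (R ⧸ Ideal.span ({x} : Set R)))
        (((g.hom : ↥N →ₗ[R] ↥F).baseChange (R ⧸ Ideal.span ({x} : Set R))) y) = 0
      rw [LinearMap.baseChange_eq_ltensor, LinearMap.baseChange_eq_ltensor]
      exact (hex2 _).mpr ⟨y, rfl⟩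
    · intro hz
      have : (LinearMap.lTensor (R ⧸ Ideal.span ({x} : Set R)) (f.hom : ↥F →ₗ[R] ↥M)) z = 0 := by
        rw [← LinearMap.baseChange_eq_ltensor]
        exact hz
      obtain ⟨y, hy⟩ := (hex2 z).mp this
      refine ⟨y, ?_⟩
      show ((g.hom : ↥N →ₗ[R] ↥F).baseChange (R ⧸ Ideal.span ({x} : Set R))) y = z
      rw [LinearMap.baseChange_eq_ltensor]
      exact hy
  · -- minimality
    show LinearMap.range ((g.hom : ↥N →ₗ[R] ↥F).baseChange (R ⧸ Ideal.span ({x} : Set R))) ≤ _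
    rintro _ ⟨y, rfl⟩
    obtain ⟨n, rfl⟩ := one_tmul_surjective x ↥N y
    rw [LinearMap.baseChange_tmul]
    exact one_tmul_mem_smul_top x hx (hmin (LinearMap.mem_range_self _ n))

lemma mem_of_mk_mem {a : R}
    (h : Ideal.Quotient.mk (Ideal.span ({x} : Set R)) a ∈ maximalIdeal (R ⧸ Ideal.span ({x} : Set R))) :
    a ∈ maximalIdeal R := by
  by_contra ha
  have : IsUnit a := by
    by_contra h'
    exact ha ((IsLocalRing.mem_maximalIdeal a).mpr h')
  exact (IsLocalRing.mem_maximalIdeal _).mp h (this.map (Ideal.Quotient.mk _))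

lemma smul_one_residue (c : R) :
    c • (1 : ResidueField (R ⧸ Ideal.span ({x} : Set R)))
      = residue (R ⧸ Ideal.span ({x} : Set R)) (Ideal.Quotient.mk (Ideal.span ({x} : Set R)) c) := by
  have h1 : c • (1 : ResidueField (R ⧸ Ideal.span ({x} : Set R)))
      = (Ideal.Quotient.mk (Ideal.span ({x} : Set R)) c) • (1 : ResidueField (R ⧸ Ideal.span ({x} : Set R))) := by
    rw [← Ideal.Quotient.algebraMap_eq, algebraMap_smul]
  rw [h1, Algebra.smul_def, mul_one, IsLocalRing.ResidueField.algebraMap_eq]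

lemma base_iso (hx : x ∈ maximalIdeal R) (hx2 : x ∉ maximalIdeal R ^ 2) :
    Nonempty (((R ⧸ Ideal.span ({x} : Set R)) ⊗[R] ↥(maximalIdeal R))
      ≃ₗ[R ⧸ Ideal.span ({x} : Set R)]
      ↥(maximalIdeal (R ⧸ Ideal.span ({x} : Set R)))
        × ResidueField (R ⧸ Ideal.span ({x} : Set R))) := by
  -- the cotangent functional
  set k := ResidueField R
  set V := (maximalIdeal R).Cotangent
  set ξ : V := (maximalIdeal R).toCotangent ⟨x, hx⟩ with hξdef
  have hξ : ξ ≠ 0 := by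
    intro h0
    exact hx2 (((maximalIdeal R).toCotangent_eq_zero ⟨x, hx⟩).mp h0)
  obtain ⟨W, hW⟩ := Submodule.exists_isCompl (Submodule.span k {ξ})
  set proj := Submodule.linearProjOfIsCompl _ W hW
  set esp := LinearEquiv.toSpanNonzeroSingleton k V ξ hξ
  set lam : V →ₗ[k] k := esp.symm.toLinearMap ∘ₗ proj with hlamdef
  have hlam : lam ξ = 1 := by
    have h1 : proj ξ = ⟨ξ, Submodule.mem_span_singleton_self ξ⟩ := by
      have := Submodule.linearProjOfIsCompl_apply_left hW ⟨ξ, Submodule.mem_span_singleton_self ξ⟩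
      exact this
    have h2 : esp 1 = ⟨ξ, Submodule.mem_span_singleton_self ξ⟩ :=
      LinearEquiv.toSpanNonzeroSingleton_one k V ξ hξ
    show esp.symm (proj ξ) = 1
    rw [h1, ← h2, LinearEquiv.symm_apply_apply]
  -- the ring map k → residue field of the quotient
  set κ : R →+* ResidueField (R ⧸ Ideal.span ({x} : Set R)) :=
    (IsLocalRing.residue (R ⧸ Ideal.span ({x} : Set R))).comp
      (Ideal.Quotient.mk (Ideal.span ({x} : Set R))) with hκdef
  have hκ : ∀ a ∈ maximalIdeal R, κ a = 0 := fun a ha =>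
    Ideal.Quotient.eq_zero_iff_mem.mpr (mk_mem_maximalIdeal x hx ha)
  set ε0 : k →+* ResidueField (R ⧸ Ideal.span ({x} : Set R)) :=
    Ideal.Quotient.lift (maximalIdeal R) κ hκ with hε0def
  have hε0 : ∀ a : R, ε0 (residue R a) = κ a := fun a => Ideal.Quotient.lift_mk _ _ _
  set ε : k →ₗ[R] ResidueField (R ⧸ Ideal.span ({x} : Set R)) :=
    { toFun := ε0
      map_add' := map_add ε0
      map_smul' := by
        intro r v
        obtain ⟨a, rfl⟩ := Ideal.Quotient.mk_surjective (I := maximalIdeal R) v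
        have h1 : r • (Ideal.Quotient.mk (maximalIdeal R) a) = Ideal.Quotient.mk _ (r * a) := rfl
        show ε0 (r • (Ideal.Quotient.mk (maximalIdeal R) a)) = r • ε0 (Ideal.Quotient.mk (maximalIdeal R) a)
        rw [h1]
        have h2 : ε0 (Ideal.Quotient.mk (maximalIdeal R) (r * a)) = κ (r * a) := hε0 _
        have h3 : ε0 (Ideal.Quotient.mk (maximalIdeal R) a) = κ a := hε0 _
        rw [h2, h3, map_mul]
        have h4 : κ r = r • (1 : ResidueField (R ⧸ Ideal.span ({x} : Set R))) :=
          (smul_one_residue x r).symm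
        rw [h4, smul_mul_assoc, one_mul] } with hεdef
  have hε1 : ε 1 = 1 := by
    show ε0 1 = 1
    exact map_one ε0
  -- the functional ρ on the maximal ideal
  set ρ : ↥(maximalIdeal R) →ₗ[R] ResidueField (R ⧸ Ideal.span ({x} : Set R)) :=
    ε ∘ₗ (LinearMap.restrictScalars R lam) ∘ₗ (maximalIdeal R).toCotangent with hρdef
  have hρx : ρ ⟨x, hx⟩ = 1 := by
    show ε (lam ξ) = 1
    rw [hlam, hε1]
  -- the projection map to the maximal ideal of the quotient
  set pmap : ↥(maximalIdeal R) →ₗ[R] ↥(maximalIdeal (R ⧸ Ideal.span ({x} : Set R))) :=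
    { toFun := fun a => ⟨Ideal.Quotient.mk (Ideal.span ({x} : Set R)) a.1,
        mk_mem_maximalIdeal x hx a.2⟩
      map_add' := by intro a b; ext; simp
      map_smul' := by
        intro r a
        simp only [RingHom.id_apply]
        apply Subtype.ext
        have h1 : ((r • a : ↥(maximalIdeal R)) : R) = r * (a : R) := rfl
        have h2 : r • (Ideal.Quotient.mk (Ideal.span ({x} : Set R)) (a : R))
            = (Ideal.Quotient.mk (Ideal.span ({x} : Set R)) r)
              * (Ideal.Quotient.mk (Ideal.span ({x} : Set R)) (a : R)) := by
          rw [← Ideal.Quotient.algebraMap_eq, ← Algebra.smul_def]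
        show Ideal.Quotient.mk (Ideal.span ({x} : Set R)) ((r • a : ↥(maximalIdeal R)) : R)
          = r • (Ideal.Quotient.mk (Ideal.span ({x} : Set R)) (a : R))
        rw [h1, h2, map_mul] } with hpmapdef
  set φ : ↥(maximalIdeal R) →ₗ[R]
      (↥(maximalIdeal (R ⧸ Ideal.span ({x} : Set R)))
        × ResidueField (R ⧸ Ideal.span ({x} : Set R))) := LinearMap.prod pmap ρ with hφdef
  set ψ := LinearMap.liftBaseChange (R ⧸ Ideal.span ({x} : Set R)) φ with hψdef
  have hψ1 : ∀ a : ↥(maximalIdeal R),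
      ψ ((1 : R ⧸ Ideal.span ({x} : Set R)) ⊗ₜ[R] a) = φ a := by
    intro a
    rw [hψdef, LinearMap.liftBaseChange_tmul, one_smul]
  have hsurj : Function.Surjective ψ := by
    rintro ⟨b, c⟩
    obtain ⟨a, ham, hmka⟩ := exists_mem_of_mem_maximalIdeal x b.2
    -- choose r with r • 1 = c - ρ ⟨a, ham⟩
    obtain ⟨t, ht⟩ := Ideal.Quotient.mk_surjective
      (I := maximalIdeal (R ⧸ Ideal.span ({x} : Set R))) (c - ρ ⟨a, ham⟩)
    obtain ⟨r, hr⟩ := Ideal.Quotient.mk_surjective (I := Ideal.span ({x} : Set R)) t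
    have hrc : r • (1 : ResidueField (R ⧸ Ideal.span ({x} : Set R))) = c - ρ ⟨a, ham⟩ := by
      rw [smul_one_residue x r, hr]
      exact ht
    refine ⟨(1 : R ⧸ Ideal.span ({x} : Set R)) ⊗ₜ[R] (⟨a, ham⟩ + r • ⟨x, hx⟩), ?_⟩
    rw [hψ1, map_add, map_smul]
    have hφa : φ ⟨a, ham⟩ = (b, ρ ⟨a, ham⟩) := by
      rw [hφdef, LinearMap.prod_apply]
      refine Prod.ext ?_ rfl
      show pmap ⟨a, ham⟩ = b
      apply Subtype.ext
      exact hmka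
    have hφx : φ ⟨x, hx⟩ = (0, 1) := by
      rw [hφdef, LinearMap.prod_apply]
      refine Prod.ext ?_ hρx
      show pmap ⟨x, hx⟩ = 0
      apply Subtype.ext
      show Ideal.Quotient.mk (Ideal.span ({x} : Set R)) x = 0
      exact Ideal.Quotient.eq_zero_iff_mem.mpr (Ideal.mem_span_singleton_self x)
    rw [hφa, hφx]
    have : r • ((0 : ↥(maximalIdeal (R ⧸ Ideal.span ({x} : Set R)))),
        (1 : ResidueField (R ⧸ Ideal.span ({x} : Set R)))) = (0, c - ρ ⟨a, ham⟩) := by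
      rw [Prod.smul_mk, smul_zero, hrc]
    rw [this]
    refine Prod.ext (by simp) ?_
    show ρ ⟨a, ham⟩ + (c - ρ ⟨a, ham⟩) = c
    ring
  have hinj : Function.Injective ψ := by
    have : ∀ z, ψ z = 0 → z = 0 := by
      intro z hz
      obtain ⟨a, rfl⟩ := one_tmul_surjective x ↥(maximalIdeal R) z
      rw [hψ1] at hz
      have h1 : pmap a = 0 := by
        have := congrArg Prod.fst hz
        exact this
      have h2 : ρ a = 0 := by
        have := congrArg Prod.snd hz
        exact this
      have h3 : (a : R) ∈ Ideal.span ({x} : Set R) := by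
        have : Ideal.Quotient.mk (Ideal.span ({x} : Set R)) (a : R) = 0 :=
          congrArg Subtype.val h1
        exact Ideal.Quotient.eq_zero_iff_mem.mp this
      obtain ⟨c, hc⟩ := Ideal.mem_span_singleton'.mp h3
      -- a = c • ⟨x, hx⟩
      have ha : a = c • (⟨x, hx⟩ : ↥(maximalIdeal R)) := by
        apply Subtype.ext
        show (a : R) = c • x
        rw [smul_eq_mul, ← hc]
      have hρa : ρ a = c • (1 : ResidueField (R ⧸ Ideal.span ({x} : Set R))) := by
        rw [ha, map_smul, hρx]
      rw [h2] at hρa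
      have hck : residue (R ⧸ Ideal.span ({x} : Set R))
          (Ideal.Quotient.mk (Ideal.span ({x} : Set R)) c) = 0 := by
        rw [← smul_one_residue x c, ← hρa]
      have hcmb : Ideal.Quotient.mk (Ideal.span ({x} : Set R)) c
          ∈ maximalIdeal (R ⧸ Ideal.span ({x} : Set R)) :=
        Ideal.Quotient.eq_zero_iff_mem.mp hck
      have hcm : c ∈ maximalIdeal R := mem_of_mk_mem x hcmb
      have ha2 : a = x • (⟨c, hcm⟩ : ↥(maximalIdeal R)) := by
        apply Subtype.ext
        show (a : R) = x • c
        rw [smul_eq_mul, mul_comm, ← hc]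
      rw [ha2]
      exact one_tmul_smul_eq_zero x _
    intro z z' h
    have : ψ (z - z') = 0 := by rw [map_sub, h, sub_self]
    have := this
    have h0 := (fun hzz => by
      have := sub_eq_zero.mp hzz; exact this : z - z' = 0 → z = z')
    exact h0 (‹∀ z, ψ z = 0 → z = 0› _ this)
  exact ⟨LinearEquiv.ofBijective ψ ⟨hinj, hsurj⟩⟩

lemma aux_induction (hx : x ∈ maximalIdeal R) (hreg : x ∈ nonZeroDivisors R) (n : ℕ) :
    ∀ (A Sm : ModuleCat.{u} R) (B C T U : ModuleCat.{u} (R ⧸ Ideal.span ({x} : Set R)))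
      (_ : ∀ a : ↥A, x • a = 0 → a = 0)
      (_ : Nonempty (((R ⧸ Ideal.span ({x} : Set R)) ⊗[R] ↥A)
        ≃ₗ[R ⧸ Ideal.span ({x} : Set R)] ↥B × ↥C))
      (_ : IsSyzygy R n A Sm)
      (_ : IsSyzygy (R ⧸ Ideal.span ({x} : Set R)) n B T)
      (_ : IsSyzygy (R ⧸ Ideal.span ({x} : Set R)) n C U),
      Nonempty (((R ⧸ Ideal.span ({x} : Set R)) ⊗[R] ↥Sm)
        ≃ₗ[R ⧸ Ideal.span ({x} : Set R)] ↥T × ↥U) := by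
  induction n with
  | zero =>
    intro A Sm B C T U hA e hS hT hU
    have hS' : Nonempty (↥Sm ≃ₗ[R] ↥A) := hS
    have hT' : Nonempty (↥T ≃ₗ[R ⧸ Ideal.span ({x} : Set R)] ↥B) := hT
    have hU' : Nonempty (↥U ≃ₗ[R ⧸ Ideal.span ({x} : Set R)] ↥C) := hU
    obtain ⟨eS⟩ := hS'; obtain ⟨eT⟩ := hT'; obtain ⟨eU⟩ := hU'; obtain ⟨e0⟩ := e
    exact ⟨((LinearEquiv.baseChange R (R ⧸ Ideal.span ({x} : Set R)) ↥Sm ↥A eS).trans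
      e0).trans (LinearEquiv.prodCongr eT.symm eU.symm)⟩
  | succ n ih =>
    intro A Sm B C T U hA e hS hT hU
    obtain ⟨N, hN, hNS⟩ := (hS : ∃ N : ModuleCat.{u} R, IsMinimalSyzygy R N A ∧ IsSyzygy R n N Sm)
    obtain ⟨P, hP, hPT⟩ := (hT : ∃ P, IsMinimalSyzygy (R ⧸ Ideal.span ({x} : Set R)) P B
      ∧ IsSyzygy (R ⧸ Ideal.span ({x} : Set R)) n P T)
    obtain ⟨Q, hQ, hQU⟩ := (hU : ∃ Q, IsMinimalSyzygy (R ⧸ Ideal.span ({x} : Set R)) Q C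
      ∧ IsSyzygy (R ⧸ Ideal.span ({x} : Set R)) n Q U)
    have hNx : ∀ a : ↥N, x • a = 0 → a = 0 := minimalSyzygy_smul_eq_zero hN hreg
    have hbc := isMinimalSyzygy_baseChange x hx hreg hN hA
    have hPQ := minimalSyzygy_prod hP hQ
    haveI : IsNoetherianRing (R ⧸ Ideal.span ({x} : Set R)) := inferInstance
    have e' : Nonempty (((R ⧸ Ideal.span ({x} : Set R)) ⊗[R] ↥N)
        ≃ₗ[R ⧸ Ideal.span ({x} : Set R)] (↥P × ↥Q)) :=
      minimalSyzygy_unique hbc hPQ e.some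
    exact ih N Sm P Q T U hNx e' hNS hPT hQU
end

/-- Let `x ∈ m \ m²` be a nonzerodivisor on a commutative Noetherian
local ring `R` and `R̄ = R/(x)`. Then `Ω^{i+1}_R k ⊗_R R̄ ≅ Ω^{i+1}_{R̄} k ⊕ Ω^i_{R̄} k`
for every `i ≥ 0`. -/
theorem syzygy_residueField_quotient_decomposition
    (R : Type u) [CommRing R] [IsLocalRing R] [IsNoetherianRing R]
    (x : R) (hx : x ∈ maximalIdeal R) (hx2 : x ∉ maximalIdeal R ^ 2)
    (hreg : x ∈ nonZeroDivisors R)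
    [IsLocalRing (R ⧸ Ideal.span {x})]
    (i : ℕ) (S : ModuleCat.{u} R) (T U : ModuleCat.{u} (R ⧸ Ideal.span {x}))
    (hS : IsSyzygy R (i + 1) (ModuleCat.of R (ResidueField R)) S)
    (hT : IsSyzygy (R ⧸ Ideal.span {x}) (i + 1)
      (ModuleCat.of (R ⧸ Ideal.span {x}) (ResidueField (R ⧸ Ideal.span {x}))) T)
    (hU : IsSyzygy (R ⧸ Ideal.span {x}) i
      (ModuleCat.of (R ⧸ Ideal.span {x}) (ResidueField (R ⧸ Ideal.span {x}))) U) :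
    Nonempty (((R ⧸ Ideal.span {x}) ⊗[R] ↥S) ≃ₗ[R ⧸ Ideal.span {x}] ↥T × ↥U) := by
  obtain ⟨N, hN, hNS⟩ := (hS : ∃ N, IsMinimalSyzygy R N (ModuleCat.of R (ResidueField R))
    ∧ IsSyzygy R i N S)
  obtain ⟨P, hP, hPT⟩ := (hT : ∃ P, IsMinimalSyzygy (R ⧸ Ideal.span {x}) P
      (ModuleCat.of (R ⧸ Ideal.span {x}) (ResidueField (R ⧸ Ideal.span {x})))
    ∧ IsSyzygy (R ⧸ Ideal.span {x}) i P T)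
  have hNx : ∀ a : ↥N, x • a = 0 → a = 0 := minimalSyzygy_smul_eq_zero hN hreg
  have eNm : Nonempty (↥N ≃ₗ[R] ↥(maximalIdeal R)) :=
    minimalSyzygy_unique hN maximalIdeal_isMinimalSyzygy (LinearEquiv.refl _ _)
  haveI : IsNoetherianRing (R ⧸ Ideal.span ({x} : Set R)) := inferInstance
  have ePm : Nonempty (↥(maximalIdeal (R ⧸ Ideal.span ({x} : Set R)))
      ≃ₗ[R ⧸ Ideal.span ({x} : Set R)] ↥P) :=
    minimalSyzygy_unique maximalIdeal_isMinimalSyzygy hP (LinearEquiv.refl _ _)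
  obtain ⟨ebase⟩ := base_iso x hx hx2
  have e : Nonempty (((R ⧸ Ideal.span ({x} : Set R)) ⊗[R] ↥N)
      ≃ₗ[R ⧸ Ideal.span ({x} : Set R)]
      (↥P × ↥(ModuleCat.of (R ⧸ Ideal.span ({x} : Set R))
        (ResidueField (R ⧸ Ideal.span ({x} : Set R)))))) :=
    ⟨((LinearEquiv.baseChange R (R ⧸ Ideal.span ({x} : Set R)) ↥N ↥(maximalIdeal R)
        eNm.some).trans ebase).trans
      (LinearEquiv.prodCongr ePm.some
        (LinearEquiv.refl _ (ResidueField (R ⧸ Ideal.span ({x} : Set R)))))⟩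
  exact aux_induction x hx hreg i N S P
    (ModuleCat.of (R ⧸ Ideal.span ({x} : Set R)) (ResidueField (R ⧸ Ideal.span ({x} : Set R))))
    T U hNx e hNS hPT hU

end
end

section
/- Let R be a commutative Noetherian local ring and let Y be a G-projective R-module such that Ext_R^1(Z, Y) = 0 for every G-projective R-module Z. Then Y is a free R-module. -/
open CategoryTheory IsLocalRing TensorProduct

universe u

noncomputable section

/-! ### Auxiliary lemmas for the proof of Statement 19 -/

namespace GProjAux

open CategoryTheory Limits

variable {R : Type u} [CommRing R]

lemma subsingleton_of_isZero {M : ModuleCat.{u} R} (h : Limits.IsZero M) :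
    Subsingleton ↥M := by
  have h0 : (𝟙 M : M ⟶ M) = 0 := h.eq_of_src _ _
  have key : ∀ x : ↥M, x = 0 := fun x =>
    calc x = (𝟙 M : M ⟶ M) x := rfl
    _ = (0 : M ⟶ M) x := by rw [h0]
    _ = 0 := LinearMap.zero_apply x
  exact ⟨fun a b => (key a).trans (key b).symm⟩

/-- Subsingleton-ness of Ext can be checked on any projective resolution. -/
lemma subsingleton_extMod_iff_exactAt {X N : ModuleCat.{u} R}
    (P : ProjectiveResolution X) (i : ℕ) :
    Subsingleton (extMod R i X N) ↔ (P.complex.linearYonedaObj R N).ExactAt i := by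
  rw [HomologicalComplex.exactAt_iff_isZero_homology]
  constructor
  · intro hsub
    exact IsZero.of_iso (ModuleCat.isZero_of_subsingleton _) (P.isoExt i N).symm
  · intro hz
    exact subsingleton_of_isZero (IsZero.of_iso hz (P.isoExt i N))

/-- Transfer subsingleton-ness of Ext along an isomorphism in the first variable. -/
lemma extMod_subsingleton_congr {X X' N : ModuleCat.{u} R} (i : ℕ) (e : ↥X ≃ₗ[R] ↥X') :
    Subsingleton (extMod R i X N) ↔ Subsingleton (extMod R i X' N) := by
  have E : extMod R i X' N ≅ extMod R i X N :=
    ((Ext R (ModuleCat.{u} R) i).mapIso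
      ((e.toModuleIso : X ≅ X').op)).app N
  exact (Equiv.subsingleton_congr E.toLinearEquiv.toEquiv).symm

section Shift

variable {A B X : ModuleCat.{u} R} (Q : ProjectiveResolution A)

/-- The augmentation map of a projective resolution, with target `A`. -/
abbrev pizero : Q.complex.X 0 ⟶ A := Q.π.f 0

lemma pizero_surj : Function.Surjective (pizero Q) := by
  have : Epi (pizero Q) := (inferInstance : Epi (Q.π.f 0))
  exact (ModuleCat.epi_iff_surjective _).mp this

lemma pizero_exact : ∀ x : ↥(Q.complex.X 0), pizero Q x = 0 →
    ∃ y, (Q.complex.d 1 0) y = x :=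
  fun x hx => (ShortComplex.moduleCat_exact_iff _).mp Q.exact₀ x hx

lemma d_pizero : Q.complex.d 1 0 ≫ pizero Q = 0 := Q.complex_d_comp_π_f_zero

variable (B) in
/-- Objects of the concatenated resolution. -/
def cX : ℕ → ModuleCat.{u} R
  | 0 => B
  | n + 1 => Q.complex.X n

variable (g : A ⟶ B)

/-- Differentials of the concatenated resolution. -/
def cd : ∀ n, cX B Q (n + 1) ⟶ cX B Q n
  | 0 => pizero Q ≫ g
  | n + 1 => Q.complex.d (n + 1) n

/-- The concatenated complex `⋯ → Q₁ → Q₀ → B`. -/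
def concat : ChainComplex (ModuleCat.{u} R) ℕ :=
  ChainComplex.of (cX B Q) (cd Q g) (by
    rintro (_ | n)
    · show Q.complex.d 1 0 ≫ (pizero Q ≫ g) = 0
      rw [← Category.assoc, d_pizero, zero_comp]
    · show Q.complex.d (n + 2) (n + 1) ≫ Q.complex.d (n + 1) n = 0
      simp)

@[simp] lemma concat_X_zero : (concat Q g).X 0 = B := rfl

@[simp] lemma concat_X_succ (n : ℕ) : (concat Q g).X (n + 1) = Q.complex.X n := rfl

lemma concat_d_one_zero : (concat Q g).d 1 0 = pizero Q ≫ g :=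
  ChainComplex.of_d (cX B Q) (cd Q g) 0

lemma concat_d_succ (n : ℕ) :
    (concat Q g).d (n + 2) (n + 1) = Q.complex.d (n + 1) n :=
  ChainComplex.of_d (cX B Q) (cd Q g) (n + 1)

variable (p : B ⟶ X) [Projective B]
variable (hg : Function.Injective g) (hp : Function.Surjective p)
  (hgp : g ≫ p = 0) (hex : ∀ b : ↥B, p b = 0 → ∃ a : ↥A, g a = b)

/-- The concatenated projective resolution of `X` built from a short exact sequence
`0 → A → B → X → 0` with `B` projective and a projective resolution of `A`. -/
def res : ProjectiveResolution X where
  complex := concat Q g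
  projective n := by
    cases n with
    | zero => exact (inferInstance : Projective B)
    | succ n => exact Q.projective n
  π := (ChainComplex.toSingle₀Equiv _ _).symm ⟨p, by
    rw [concat_d_one_zero]; exact (Category.assoc (pizero Q) g p).trans ((congrArg (pizero Q ≫ ·) hgp).trans comp_zero)⟩
  quasiIso := ⟨fun n => by
    cases n with
    | zero =>
      rw [ChainComplex.quasiIsoAt₀_iff, ShortComplex.quasiIso_iff_of_zeros']
      · constructor
        · rw [ShortComplex.moduleCat_exact_iff]
          intro (b : ↥B) hb
          have hb' : p b = 0 := by
            have : ((ChainComplex.toSingle₀Equiv (concat Q g) X).symm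
                ⟨p, by rw [concat_d_one_zero]; exact (Category.assoc (pizero Q) g p).trans ((congrArg (pizero Q ≫ ·) hgp).trans comp_zero)⟩).f 0 b = 0 := hb
            erw [ChainComplex.toSingle₀Equiv_symm_apply_f_zero] at this
            exact this
          obtain ⟨a, ha⟩ := hex b hb'
          obtain ⟨y, hy⟩ := pizero_surj Q a
          refine ⟨y, ?_⟩
          show ((concat Q g).d 1 0) y = b
          rw [concat_d_one_zero]
          show g (pizero Q y) = b
          rw [hy, ha]
        · rw [ModuleCat.epi_iff_surjective]
          intro x
          obtain ⟨b, hb⟩ := hp x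
          exact ⟨b, by
            show ((ChainComplex.toSingle₀Equiv (concat Q g) X).symm
                ⟨p, by rw [concat_d_one_zero]; exact (Category.assoc (pizero Q) g p).trans ((congrArg (pizero Q ≫ ·) hgp).trans comp_zero)⟩).f 0 b = x
            erw [ChainComplex.toSingle₀Equiv_symm_apply_f_zero]
            exact hb⟩
      all_goals rfl
    | succ n =>
      rw [quasiIsoAt_iff_exactAt' _ _ (ChainComplex.exactAt_succ_single_obj _ _)]
      rw [HomologicalComplex.exactAt_iff' _ (n + 2) (n + 1) n (by simp) (by simp),
        ShortComplex.moduleCat_exact_iff]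
      cases n with
      | zero =>
        intro x hx
        have hx' : g (pizero Q x) = 0 := by
          have : ((concat Q g).d 1 0) x = 0 := hx
          rw [concat_d_one_zero] at this
          exact this
        have : pizero Q x = 0 := by
          apply hg
          simpa using hx'
        obtain ⟨y, hy⟩ := pizero_exact Q x this
        refine ⟨y, ?_⟩
        show ((concat Q g).d 2 1) y = x
        rw [concat_d_succ]
        exact hy
      | succ m =>
        intro x hx
        have hx' : (Q.complex.d (m + 1) m) x = 0 := by
          have : ((concat Q g).d (m + 2) (m + 1)) x = 0 := hx
          rwa [concat_d_succ] at this
        obtain ⟨y, hy⟩ := (ShortComplex.moduleCat_exact_iff _).mp (Q.exact_succ m) x hx'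
        refine ⟨y, ?_⟩
        show ((concat Q g).d (m + 3) (m + 2)) y = x
        rw [concat_d_succ]
        exact hy⟩

variable (N : ModuleCat.{u} R)

include Q hg hp hgp hex in
/-- `Ext^1(X, N)` vanishes iff every map `A → N` extends to `B`. -/
lemma ext_one_iff :
    Subsingleton (extMod R 1 X N) ↔ ∀ φ : A ⟶ N, ∃ ψ : B ⟶ N, g ≫ ψ = φ := by
  rw [subsingleton_extMod_iff_exactAt (res Q g p hg hp hgp hex) 1,
    HomologicalComplex.exactAt_iff' _ 0 1 2 (by simp) (by simp),
    ShortComplex.moduleCat_exact_iff]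
  have hepi : Epi (pizero Q) := (inferInstance : Epi (Q.π.f 0))
  constructor
  · intro hexact φ
    obtain ⟨ψ, hψ⟩ := hexact (pizero Q ≫ φ) (by
      show (concat Q g).d 2 1 ≫ (pizero Q ≫ φ) = 0
      rw [concat_d_succ]
      exact (Category.assoc (Q.complex.d 1 0) (pizero Q) φ).symm.trans
        ((congrArg (· ≫ φ) (d_pizero Q)).trans zero_comp))
    have hψ' : (concat Q g).d 1 0 ≫ ψ = pizero Q ≫ φ := hψ
    replace hψ' : pizero Q ≫ g ≫ ψ = pizero Q ≫ φ := (Category.assoc _ _ _).symm.trans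
      ((congrArg (· ≫ ψ) (concat_d_one_zero Q g)).symm.trans hψ')
    exact ⟨ψ, (cancel_epi (pizero Q)).mp hψ'⟩
  · intro hext f hf
    have hf' : Q.complex.d 1 0 ≫ f = 0 := by
      have : (concat Q g).d 2 1 ≫ f = 0 := hf
      rwa [concat_d_succ] at this
    obtain ⟨φ, hφ⟩ := Cofork.IsColimit.desc' Q.isColimitCokernelCofork f
      (hf'.trans zero_comp.symm)
    obtain ⟨ψ, hψ⟩ := hext φ
    refine ⟨ψ, ?_⟩
    show (concat Q g).d 1 0 ≫ ψ = f
    refine (congrArg (· ≫ ψ) (concat_d_one_zero Q g)).trans ((Category.assoc _ _ _).trans ?_)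
    rw [hψ]
    exact hφ

include Q hg hp hgp hex in
/-- Dimension shifting : `Ext^(k+2)(X, N) ≅ Ext^(k+1)(A, N)` (as a vanishing statement). -/
lemma ext_succ_iff (k : ℕ) :
    Subsingleton (extMod R (k + 2) X N) ↔ Subsingleton (extMod R (k + 1) A N) := by
  rw [subsingleton_extMod_iff_exactAt (res Q g p hg hp hgp hex) (k + 2),
    subsingleton_extMod_iff_exactAt Q (k + 1),
    HomologicalComplex.exactAt_iff' _ (k + 1) (k + 2) (k + 3) (by simp) (by simp),
    HomologicalComplex.exactAt_iff' _ k (k + 1) (k + 2) (by simp) (by simp)]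
  refine ShortComplex.exact_iff_of_iso (ShortComplex.isoMk
    (Iso.refl _) (Iso.refl _) (Iso.refl _) ?_ ?_)
  · show 𝟙 _ ≫ (Q.complex.linearYonedaObj R N).d k (k + 1) =
      ((concat Q g).linearYonedaObj R N).d (k + 1) (k + 2) ≫ 𝟙 _
    rw [Category.comp_id, Category.id_comp]
    simp only [ChainComplex.linearYonedaObj_d]
    rw [concat_d_succ]
    rfl
  · show 𝟙 _ ≫ (Q.complex.linearYonedaObj R N).d (k + 1) (k + 2) =
      ((concat Q g).linearYonedaObj R N).d (k + 2) (k + 3) ≫ 𝟙 _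
    rw [Category.comp_id, Category.id_comp]
    simp only [ChainComplex.linearYonedaObj_d]
    rw [concat_d_succ]
    rfl

end Shift

end GProjAux

/-- If `Y` is a G-projective module over a commutative Noetherian local
ring `R` such that `Ext_R^1(Z, Y) = 0` for every G-projective `R`-module `Z`, then `Y`
is free. -/
theorem gprojective_free_of_ext_vanishing
    (R : Type u) [CommRing R] [IsLocalRing R] [IsNoetherianRing R]
    (Y : ModuleCat.{u} R) (hY : IsGProjective R Y)
    (h : ∀ Z : ModuleCat.{u} R, IsGProjective R Z → Subsingleton (extMod R 1 Z Y)) :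
    Module.Free R Y := by
  classical
  obtain ⟨hfin, hbid, hExtY, hExtYd⟩ := hY
  haveI : Module.Finite R ↥Y := hfin
  haveI : Module.Finite R (Module.Dual R ↥Y) := by
    obtain ⟨m, s, hs⟩ := Module.Finite.exists_fin' R ↥Y
    exact Module.Finite.of_injective (LinearMap.dualMap s)
      (LinearMap.dualMap_injective_of_surjective hs)
  -- a finite free cover of the dual of `Y`
  obtain ⟨n, q0, hq0⟩ := Module.Finite.exists_fin' R (Module.Dual R ↥Y)
  let F : ModuleCat.{u} R := ModuleCat.of R (Fin n → R)
  let Yd : ModuleCat.{u} R := ModuleCat.of R (Module.Dual R ↥Y)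
  let q : F ⟶ Yd := ModuleCat.ofHom q0
  let Ks : Submodule R (Fin n → R) := LinearMap.ker q0
  let K : ModuleCat.{u} R := ModuleCat.of R ↥Ks
  let gK : K ⟶ F := ModuleCat.ofHom Ks.subtype
  have hgK : Function.Injective gK := Subtype.val_injective
  have hgq : gK ≫ q = 0 := ModuleCat.hom_ext (LinearMap.ext fun k => k.2)
  have hexq : ∀ b : ↥F, q b = 0 → ∃ a : ↥K, gK a = b :=
    fun b hb => ⟨⟨b, hb⟩, rfl⟩
  haveI hPF : Projective F :=
    (IsProjective.iff_projective.{u, u} (Fin n → R)).mp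
      (inferInstance : Module.Projective R (Fin n → R))
  let Q1 : ProjectiveResolution K := ProjectiveResolution.of K
  -- `Ext^1(Y^*, R) = 0` gives that every functional on `K` extends to `F`
  have E1 : ∀ φ : K ⟶ ModuleCat.of R R, ∃ ψ : F ⟶ ModuleCat.of R R, gK ≫ ψ = φ :=
    (GProjAux.ext_one_iff Q1 gK q hgK hq0 hgq hexq (ModuleCat.of R R)).mp
      (hExtYd 1 one_pos)
  -- the dualized sequence `0 → Y → F^* → K^* → 0`, first at the level of linear maps
  let JY : ↥Y →ₗ[R] Module.Dual R (Fin n → R) :=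
    (LinearMap.dualMap q0).comp (Module.Dual.eval R ↥Y)
  let PF : Module.Dual R (Fin n → R) →ₗ[R] Module.Dual R ↥Ks :=
    LinearMap.dualMap Ks.subtype
  have hdq_inj : Function.Injective (LinearMap.dualMap q0) := by
    intro ξ ζ hξζ
    apply LinearMap.ext
    intro u
    obtain ⟨x, rfl⟩ := hq0 u
    exact congrArg (fun (m : Module.Dual R (Fin n → R)) => m x) hξζ
  have hJY_inj : Function.Injective JY := fun a b hab => hbid.1 (hdq_inj hab)
  have hPF_surj : Function.Surjective PF := by
    intro φ
    obtain ⟨ψ, hψ⟩ := E1 (show K ⟶ ModuleCat.of R R from ModuleCat.ofHom φ)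
    refine ⟨ψ.hom, LinearMap.ext fun k => ?_⟩
    exact congrArg (fun (m : K ⟶ ModuleCat.of R R) => m k) hψ
  have hPFJY : PF.comp JY = 0 := by
    apply LinearMap.ext
    intro y
    apply LinearMap.ext
    intro k
    show (q0 (Ks.subtype k)) y = 0
    rw [(LinearMap.mem_ker.mp k.2 : q0 (Ks.subtype k) = 0)]
    rfl
  have hEX2 : ∀ b : Module.Dual R (Fin n → R), PF b = 0 → ∃ a : ↥Y, JY a = b := by
    intro b hb
    have hle : Ks ≤ LinearMap.ker b := by
      intro x hx
      have := congrArg (fun (m : Module.Dual R ↥Ks) => m ⟨x, hx⟩) hb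
      exact this
    let e := q0.quotKerEquivOfSurjective hq0
    let ψ : Module.Dual R ↥Y →ₗ[R] R := (Ks.liftQ b hle).comp (e.symm : _ →ₗ[R] _)
    have hψq : ∀ x, ψ (q0 x) = b x := by
      intro x
      have he : e (Submodule.Quotient.mk x) = q0 x := by
        simp [e, LinearMap.quotKerEquivOfSurjective, LinearEquiv.trans_apply]
      have hsymm : e.symm (q0 x) = Submodule.Quotient.mk x := by
        rw [← he, LinearEquiv.symm_apply_apply]
      show (Ks.liftQ b hle) (e.symm (q0 x)) = b x
      rw [hsymm, Submodule.liftQ_apply]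
    obtain ⟨y, hy⟩ := hbid.2 ψ
    refine ⟨y, ?_⟩
    apply LinearMap.ext
    intro x
    show (Module.Dual.eval R ↥Y y) (q0 x) = b x
    rw [hy]
    exact hψq x
  -- biduality facts
  have evF_bij : Function.Bijective (Module.Dual.eval R (Fin n → R)) :=
    Module.bijective_dual_eval R (Fin n → R)
  have f1 : ∀ k : ↥Ks,
      (LinearMap.dualMap PF) (Module.Dual.eval R ↥Ks k) =
        Module.Dual.eval R (Fin n → R) (Ks.subtype k) := by
    intro k
    apply LinearMap.ext
    intro α
    rfl
  have hdPF_inj : Function.Injective (LinearMap.dualMap PF) := by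
    intro ξ ζ hξζ
    apply LinearMap.ext
    intro u
    obtain ⟨x, rfl⟩ := hPF_surj u
    exact congrArg (fun (m : Module.Dual R (Module.Dual R (Fin n → R))) => m x) hξζ
  have f2 : ∀ (ζ : Module.Dual R (Module.Dual R ↥Ks)) (y : ↥Y),
      (LinearMap.dualMap PF ζ) (JY y) = 0 := by
    intro ζ y
    have h0 : PF (JY y) = 0 := by
      have := congrArg (fun (m : ↥Y →ₗ[R] Module.Dual R ↥Ks) => m y) hPFJY
      exact this
    calc (LinearMap.dualMap PF ζ) (JY y) = ζ (PF (JY y)) := rfl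
    _ = ζ 0 := by rw [h0]
    _ = 0 := map_zero ζ
  have evK_bij : Function.Bijective (Module.Dual.eval R ↥Ks) := by
    constructor
    · intro a b hab
      have : Module.Dual.eval R (Fin n → R) (Ks.subtype a) =
          Module.Dual.eval R (Fin n → R) (Ks.subtype b) := by
        rw [← f1 a, ← f1 b, hab]
      exact Subtype.val_injective (evF_bij.1 this)
    · intro ζ
      obtain ⟨x, hx⟩ := evF_bij.2 ((LinearMap.dualMap PF) ζ)
      have hq0x : q0 x = 0 := by
        apply LinearMap.ext
        intro y
        calc (q0 x) y = (Module.Dual.eval R (Fin n → R) x) (JY y) := rfl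
        _ = ((LinearMap.dualMap PF) ζ) (JY y) := by rw [hx]
        _ = 0 := f2 ζ y
      refine ⟨⟨x, hq0x⟩, hdPF_inj ?_⟩
      rw [f1]
      show Module.Dual.eval R (Fin n → R) x = (LinearMap.dualMap PF) ζ
      exact hx
  have tri : ∀ ξ : Module.Dual R ↥Ks,
      (LinearMap.dualMap (Module.Dual.eval R ↥Ks))
        (Module.Dual.eval R (Module.Dual R ↥Ks) ξ) = ξ :=
    fun ξ => rfl
  have evKd_bij : Function.Bijective (Module.Dual.eval R (Module.Dual R ↥Ks)) := by
    constructor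
    · intro a b hab
      rw [← tri a, ← tri b, hab]
    · intro ζ
      refine ⟨(LinearMap.dualMap (Module.Dual.eval R ↥Ks)) ζ, ?_⟩
      apply LinearMap.ext
      intro θ
      obtain ⟨k, rfl⟩ := evK_bij.2 θ
      rfl
  -- now package the dualized sequence categorically
  let Fd : ModuleCat.{u} R := ModuleCat.of R (Module.Dual R (Fin n → R))
  let Kd : ModuleCat.{u} R := ModuleCat.of R (Module.Dual R ↥K)
  let jY : Y ⟶ Fd := ModuleCat.ofHom JY
  let pF : Fd ⟶ Kd := ModuleCat.ofHom PF
  have hjY_inj : Function.Injective jY := hJY_inj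
  have hpF_surj : Function.Surjective pF := hPF_surj
  have hgp2 : jY ≫ pF = 0 := ModuleCat.hom_ext hPFJY
  have hex2 : ∀ b : ↥Fd, pF b = 0 → ∃ a : ↥Y, jY a = b := hEX2
  haveI hPFd : Projective Fd :=
    (IsProjective.iff_projective.{u, u} (Module.Dual R (Fin n → R))).mp
      (inferInstance : Module.Projective R (Module.Dual R (Fin n → R)))
  let Q2 : ProjectiveResolution Y := ProjectiveResolution.of Y
  haveI : Module.Finite R (Module.Dual R (Fin n → R)) := inferInstance
  have hKdfin : Module.Finite R (Module.Dual R ↥Ks) :=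
    Module.Finite.of_surjective PF hPF_surj
  have hZ : IsGProjective R Kd := by
    refine ⟨hKdfin, evKd_bij, ?_, ?_⟩
    · intro i hi
      match i, hi with
      | 1, _ =>
        refine (GProjAux.ext_one_iff Q2 jY pF hjY_inj hpF_surj hgp2 hex2
          (ModuleCat.of R R)).mpr ?_
        intro φ
        obtain ⟨x, hx⟩ := hq0 φ.hom
        refine ⟨show Fd ⟶ ModuleCat.of R R from ModuleCat.ofHom <|
          Module.Dual.eval R (Fin n → R) x, ?_⟩
        apply ModuleCat.hom_ext
        apply LinearMap.ext
        intro y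
        show (q0 x) y = φ y
        rw [hx]
      | (k + 2), _ =>
        exact (GProjAux.ext_succ_iff Q2 jY pF hjY_inj hpF_surj hgp2 hex2
          (ModuleCat.of R R) k).mpr (hExtY (k + 1) (Nat.succ_pos k))
    · intro i hi
      refine (GProjAux.extMod_subsingleton_congr (X' := K) i
        ((LinearEquiv.ofBijective _ evK_bij).symm)).mpr ?_
      match i, hi with
      | (k + 1), _ =>
        exact (GProjAux.ext_succ_iff Q1 gK q hgK hq0 hgq hexq
          (ModuleCat.of R R) k).mp (hExtYd (k + 2) (Nat.succ_pos _))
  -- the extension `0 → Y → F^* → K^* → 0` splits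
  obtain ⟨r, hr⟩ := (GProjAux.ext_one_iff Q2 jY pF hjY_inj hpF_surj hgp2 hex2 Y).mp
    (h Kd hZ) (𝟙 Y)
  haveI : Module.Projective R ↥Y :=
    Module.Projective.of_split (JY : ↥Y →ₗ[R] Module.Dual R (Fin n → R))
      (show Module.Dual R (Fin n → R) →ₗ[R] ↥Y from r.hom) (congrArg ModuleCat.Hom.hom hr)
  haveI : Module.FinitePresentation R ↥Y := Module.finitePresentation_of_finite _ _
  exact Module.free_of_flat_of_isLocalRing

end
end
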